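/- arXiv:2511.00298 — 8 statements merged into one kernel-verified Lean document; each statement's English description precedes it below -/
import Mathlib

section
/- Let G₀ be a semisimple graph and M a matroid on E(G₀) with rank function r having the d-dimensional 0-extension property. Let G = (V,E) ⊆ G₀, let K ⊆ V be an M-seed of G, and let v ∈ V−K satisfy |(K+v) ∩ N_G(v)| ≥ d. Then K+v is also an M-seed of G. -/
/-!
Let `K ⊆ K' ⊊ V` and let `x ∉ K'` have `d` neighbours in `K' + x`. Adding `x`, with `d` of its
edges, to a basis of `G[K']` is a 0-extension, so `r(G[K' + x]) ≥ r(G[K']) + d`. The seed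
condition on `K` supplies such an `x` for every `K' ⊇ K`, hence
`r(G[K']) + d·|V − K'| ≤ r(G)` for all `K ⊆ K' ⊆ V`, with equality at `K' = K`. Applying this to
`K' = K + v` and comparing with one step from `K` to `K + v` gives the rank equality for `K + v`;
the vertex-growth condition for `K + v` is inherited from `K`, as it quantifies over supersets.
-/

open Finset

/-- A semisimple graph: a finite vertex set together with a set of edges
(elements of `Sym2 ν`, so loops are allowed but there are no parallel edges),
each of whose endpoints lies in the vertex set. -/
structure SSGraph (ν : Type*) [DecidableEq ν] where
  verts : Finset ν
  edges : Finset (Sym2 ν)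
  incident : ∀ e ∈ edges, ∀ x ∈ e, x ∈ verts

namespace SSGraph

variable {ν : Type*} [DecidableEq ν]

/-- The subgraph relation. -/
def Sub (G H : SSGraph ν) : Prop := G.verts ⊆ H.verts ∧ G.edges ⊆ H.edges

/-- The set of vertices of `G` adjacent to `x` (including `x` itself if there is a loop at `x`). -/
def nbrs (G : SSGraph ν) (x : ν) : Finset ν :=
  G.verts.filter (fun y => s(x, y) ∈ G.edges)

/-- The degree of a vertex: the number of incident edges, counting a loop once. -/
def deg (G : SSGraph ν) (v : ν) : ℕ := (G.edges.filter (fun e => v ∈ e)).card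

/-- The edge set of the subgraph of `G` induced by `K`. -/
def induce (G : SSGraph ν) (K : Finset ν) : Finset (Sym2 ν) :=
  G.edges ∩ K.sym2

/-- Deletion of a vertex. -/
def del (G : SSGraph ν) (u : ν) : SSGraph ν where
  verts := G.verts.erase u
  edges := G.edges.filter (fun e => u ∉ e)
  incident := by
    intro e he x hx
    simp only [mem_filter] at he
    exact mem_erase.mpr ⟨fun h => he.2 (h ▸ hx), G.incident e he.1 x hx⟩

/-- `G₂` is obtained from `G₁` by a `d`-dimensional 0-extension: add a new vertex `v`
joined to `d` vertices of `V(G₁) + v` (a loop at `v` being added if `v` is among them). -/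
def IsZeroExt (d : ℕ) (G₁ G₂ : SSGraph ν) : Prop :=
  ∃ v ∉ G₁.verts, ∃ D : Finset ν, D ⊆ insert v G₁.verts ∧ D.card = d ∧
    G₂.verts = insert v G₁.verts ∧ G₂.edges = G₁.edges ∪ D.image (fun u => s(v, u))

/-- `G₂` is obtained from `G₁` by a `d`-dimensional double 1-extension on an edge `xy`. -/
def IsDouble1Ext (d : ℕ) (G₁ G₂ : SSGraph ν) : Prop :=
  ∃ x y, s(x, y) ∈ G₁.edges ∧
  ∃ u v, u ∉ G₁.verts ∧ v ∉ G₁.verts ∧ u ≠ v ∧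
  ∃ Du Dv : Finset ν,
    Du ⊆ insert u G₁.verts ∧ x ∈ Du ∧ Du.card = d ∧
    Dv ⊆ insert v G₁.verts ∧ y ∈ Dv ∧ Dv.card = d ∧
    G₂.verts = insert u (insert v G₁.verts) ∧
    G₂.edges = insert s(u, v)
      (((G₁.edges.erase s(x, y)) ∪ Du.image (fun w => s(u, w))) ∪ Dv.image (fun w => s(v, w)))

/-- `G₂` is obtained from `G₁` by a `d`-dimensional looped 1-extension on a non-loop edge `xy`. -/
def IsLooped1Ext (d : ℕ) (G₁ G₂ : SSGraph ν) : Prop :=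
  ∃ x y, x ≠ y ∧ s(x, y) ∈ G₁.edges ∧
  ∃ v ∉ G₁.verts, ∃ D : Finset ν, D ⊆ G₁.verts ∧ x ∈ D ∧ y ∈ D ∧ D.card = d ∧
    G₂.verts = insert v G₁.verts ∧
    G₂.edges = insert s(v, v) ((G₁.edges.erase s(x, y)) ∪ D.image (fun w => s(v, w)))

end SSGraph

variable {ν : Type*} [DecidableEq ν]

/-- `r` is the rank function of a matroid on the edges. -/
structure IsRankFn (r : Finset (Sym2 ν) → ℕ) : Prop where
  empty : r ∅ = 0
  le_insert : ∀ A e, r A ≤ r (insert e A)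
  insert_le : ∀ A e, r (insert e A) ≤ r A + 1
  submodular : ∀ A B, r (A ∪ B) + r (A ∩ B) ≤ r A + r B

/-- A graph is `M`-independent if its edge set is independent in the matroid with rank function `r`. -/
def Indep (r : Finset (Sym2 ν) → ℕ) (G : SSGraph ν) : Prop := r G.edges = G.edges.card

/-- The matroid with rank function `r` on the edges of `G₀` has the `d`-dimensional
0-extension property. -/
def ZeroExtProp (d : ℕ) (r : Finset (Sym2 ν) → ℕ) (G₀ : SSGraph ν) : Prop :=
  ∀ G₁ G₂ : SSGraph ν, G₁.Sub G₀ → G₂.Sub G₀ → Indep r G₁ →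
    SSGraph.IsZeroExt d G₁ G₂ → Indep r G₂

/-- The `d`-dimensional double 1-extension property. -/
def Double1ExtProp (d : ℕ) (r : Finset (Sym2 ν) → ℕ) (G₀ : SSGraph ν) : Prop :=
  ∀ G₁ G₂ : SSGraph ν, G₁.Sub G₀ → G₂.Sub G₀ → Indep r G₁ →
    SSGraph.IsDouble1Ext d G₁ G₂ → Indep r G₂

/-- The `d`-dimensional looped 1-extension property. -/
def Looped1ExtProp (d : ℕ) (r : Finset (Sym2 ν) → ℕ) (G₀ : SSGraph ν) : Prop :=
  ∀ G₁ G₂ : SSGraph ν, G₁.Sub G₀ → G₂.Sub G₀ → Indep r G₁ →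
    SSGraph.IsLooped1Ext d G₁ G₂ → Indep r G₂

/-- `K` is an `M`-seed of `G` with respect to `d`. -/
def IsSeed (d : ℕ) (r : Finset (Sym2 ν) → ℕ) (G : SSGraph ν) (K : Finset ν) : Prop :=
  K ⊆ G.verts ∧
  r G.edges = r (G.induce K) + d * (G.verts.card - K.card) ∧
  ∀ K' : Finset ν, K ⊆ K' → K' ⊂ G.verts →
    ∃ x ∈ G.verts \ K', d ≤ ((insert x K') ∩ G.nbrs x).card

namespace IsRankFn

variable {r : Finset (Sym2 ν) → ℕ}

theorem mono (hr : IsRankFn r) {A B : Finset (Sym2 ν)} (h : A ⊆ B) : r A ≤ r B := by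
  rw [← union_sdiff_of_subset h]
  generalize B \ A = C
  induction C using Finset.induction_on with
  | empty => simp
  | insert e C _ ih => exact ih.trans (union_insert e A C ▸ hr.le_insert _ _)

theorem rank_insert_le_of_subset (hr : IsRankFn r) {A B : Finset (Sym2 ν)} (hBA : B ⊆ A)
    (hAB : r A ≤ r B) (e : Sym2 ν) : r (insert e A) ≤ r (insert e B) := by
  have hsub := hr.submodular (insert e B) A
  rw [insert_union, union_eq_right.mpr hBA] at hsub
  have hB : r B ≤ r (insert e B ∩ A) :=
    hr.mono (subset_inter (subset_insert e B) hBA)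
  omega

theorem exists_subset_rank_eq_card (hr : IsRankFn r) (A : Finset (Sym2 ν)) :
    ∃ B ⊆ A, r B = #B ∧ r B = r A := by
  induction A using Finset.induction_on with
  | empty => exact ⟨∅, subset_rfl, by simp [hr.empty], rfl⟩
  | insert e A _ ih =>
    obtain ⟨B, hBA, hBind, hBrank⟩ := ih
    have hle := hr.rank_insert_le_of_subset hBA hBrank.ge e
    have hup := hr.insert_le B e
    by_cases hgrow : r (insert e B) = r B + 1
    · have heB : e ∉ B := fun h => by rw [insert_eq_of_mem h] at hgrow; omega
      refine ⟨insert e B, insert_subset_insert e hBA, ?_, ?_⟩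
      · rw [card_insert_of_notMem heB]; omega
      · exact le_antisymm (hr.mono (insert_subset_insert e hBA)) hle
    · have hlow := hr.le_insert B e
      refine ⟨B, hBA.trans (subset_insert e A), hBind, ?_⟩
      exact le_antisymm (hr.mono (hBA.trans (subset_insert e A))) (by omega)

end IsRankFn

namespace SSGraph

theorem Sub.trans {G H L : SSGraph ν} (hGH : G.Sub H) (hHL : H.Sub L) : G.Sub L :=
  ⟨hGH.1.trans hHL.1, hGH.2.trans hHL.2⟩

theorem mem_induce {G : SSGraph ν} {K : Finset ν} {e : Sym2 ν} :
    e ∈ G.induce K ↔ e ∈ G.edges ∧ ∀ y ∈ e, y ∈ K := by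
  rw [induce, mem_inter, mem_sym2_iff]

theorem induce_verts (G : SSGraph ν) : G.induce G.verts = G.edges :=
  inter_eq_left.mpr fun e he => mem_sym2_iff.mpr (G.incident e he)

def restrict (G : SSGraph ν) (K : Finset ν) (B : Finset (Sym2 ν)) (hB : B ⊆ G.induce K) :
    SSGraph ν where
  verts := K
  edges := B
  incident _ he := (mem_induce.mp (hB he)).2

theorem restrict_sub {G : SSGraph ν} {K : Finset ν} {B : Finset (Sym2 ν)}
    (hB : B ⊆ G.induce K) (hK : K ⊆ G.verts) : (SSGraph.restrict G K B hB).Sub G :=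
  ⟨hK, fun _ he => (mem_induce.mp (hB he)).1⟩

end SSGraph

theorem Finset.card_sub_card_eq_card_sub_card_insert_add_one {α : Type*} [DecidableEq α]
    {s t : Finset α} {x : α} (hxs : x ∉ s) (hxst : insert x s ⊆ t) :
    #t - #s = #t - #(insert x s) + 1 := by
  have := card_le_card hxst
  rw [card_insert_of_notMem hxs] at this ⊢
  omega

open SSGraph

section

variable {d : ℕ} {r : Finset (Sym2 ν) → ℕ} {G₀ G : SSGraph ν}

theorem union_image_subset_induce_insert {K : Finset ν} {B : Finset (Sym2 ν)}
    (hB : B ⊆ G.induce K) {x : ν} {D : Finset ν} (hD : D ⊆ insert x K ∩ G.nbrs x) :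
    B ∪ D.image (fun u => s(x, u)) ⊆ G.induce (insert x K) := by
  refine union_subset (fun e he => ?_) (fun e he => ?_)
  · obtain ⟨heG, heK⟩ := mem_induce.mp (hB he)
    exact mem_induce.mpr ⟨heG, fun y hy => mem_insert_of_mem (heK y hy)⟩
  · obtain ⟨u, hu, rfl⟩ := mem_image.mp he
    obtain ⟨huK, hux⟩ := mem_inter.mp (hD hu)
    refine mem_induce.mpr ⟨(mem_filter.mp hux).2, fun y hy => ?_⟩
    rcases Sym2.mem_iff.mp hy with rfl | rfl
    exacts [mem_insert_self y K, huK]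

/-- The graph `(K + x, B ∪ {xu : u ∈ D})` is a 0-extension of the independent graph `(K, B)`. -/
theorem rank_union_image_eq_card_add (hext : ZeroExtProp d r G₀) (hG : G.Sub G₀)
    {K : Finset ν} (hK : K ⊆ G.verts) {B : Finset (Sym2 ν)} (hB : B ⊆ G.induce K)
    (hBind : r B = #B) {x : ν} (hxV : x ∈ G.verts) (hxK : x ∉ K) {D : Finset ν}
    (hD : D ⊆ insert x K ∩ G.nbrs x) (hDcard : #D = d) :
    r (B ∪ D.image (fun u => s(x, u))) = #B + d := by
  have hsub := union_image_subset_induce_insert hB hD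
  have hdisj : Disjoint B (D.image (fun u => s(x, u))) := by
    refine disjoint_left.mpr fun e heB he => ?_
    obtain ⟨u, -, rfl⟩ := mem_image.mp he
    exact hxK ((mem_induce.mp (hB heB)).2 x (Sym2.mem_mk_left x u))
  have hcard : #(D.image (fun u => s(x, u))) = d := by
    rw [card_image_of_injective D fun _ _ => Sym2.congr_right.mp, hDcard]
  have hindep : Indep r (SSGraph.restrict G (insert x K) _ hsub) :=
    hext _ _ ((restrict_sub hB hK).trans hG)
      ((restrict_sub hsub (insert_subset hxV hK)).trans hG) hBind
      ⟨x, hxK, D, fun u hu => (mem_inter.mp (hD hu)).1, hDcard, rfl, rfl⟩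
  rw [Indep] at hindep
  exact hindep.trans (by rw [SSGraph.restrict, card_union_of_disjoint hdisj, hcard])

theorem rank_induce_add_le_rank_induce_insert (hr : IsRankFn r) (hext : ZeroExtProp d r G₀)
    (hG : G.Sub G₀) {K : Finset ν} (hK : K ⊆ G.verts) {x : ν} (hxV : x ∈ G.verts)
    (hxK : x ∉ K) (hd : d ≤ #(insert x K ∩ G.nbrs x)) :
    r (G.induce K) + d ≤ r (G.induce (insert x K)) := by
  obtain ⟨B, hBK, hBind, hBrank⟩ := hr.exists_subset_rank_eq_card (G.induce K)
  obtain ⟨D, hD, hDcard⟩ := exists_subset_card_eq hd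
  calc r (G.induce K) + d = #B + d := by rw [← hBrank, hBind]
    _ = r (B ∪ D.image (fun u => s(x, u))) :=
      (rank_union_image_eq_card_add hext hG hK hBK hBind hxV hxK hD hDcard).symm
    _ ≤ r (G.induce (insert x K)) := hr.mono (union_image_subset_induce_insert hBK hD)

theorem IsSeed.rank_induce_add_le_rank (hr : IsRankFn r) (hext : ZeroExtProp d r G₀)
    (hG : G.Sub G₀) {K : Finset ν} (hK : IsSeed d r G K) {K' : Finset ν} (hKK' : K ⊆ K')
    (hK'V : K' ⊆ G.verts) : r (G.induce K') + d * (#G.verts - #K') ≤ r G.edges := by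
  revert hKK'
  refine K'.strongDownwardInductionOn (n := #G.verts) (fun K' ih _ hK'V hKK' => ?_)
    (card_le_card hK'V) hK'V
  rcases hK'V.eq_or_ssubset with rfl | hK'V'
  · simp [induce_verts]
  obtain ⟨x, hx, hdx⟩ := hK.2.2 K' hKK' hK'V'
  obtain ⟨hxV, hxK'⟩ := mem_sdiff.mp hx
  have hxK'V := insert_subset hxV hK'V
  have hstep := rank_induce_add_le_rank_induce_insert hr hext hG hK'V hxV hxK' hdx
  have hrest := ih (card_le_card hxK'V) (ssubset_insert hxK') hxK'V
    (hKK'.trans (subset_insert x K'))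
  rw [Finset.card_sub_card_eq_card_sub_card_insert_add_one hxK' hxK'V, Nat.mul_succ]
  omega

end

/-- if `K` is an `M`-seed of `G` and `v ∈ V − K` has at least `d`
neighbours in `K + v`, then `K + v` is also an `M`-seed of `G`. -/
theorem seed_insert
    {ν : Type*} [DecidableEq ν] (d : ℕ) (G₀ : SSGraph ν)
    (r : Finset (Sym2 ν) → ℕ) (hr : IsRankFn r) (hext : ZeroExtProp d r G₀)
    (G : SSGraph ν) (hG : G.Sub G₀) (K : Finset ν) (hK : IsSeed d r G K)
    (v : ν) (hv : v ∈ G.verts \ K) (hd : d ≤ ((insert v K) ∩ G.nbrs v).card) :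
    IsSeed d r G (insert v K) := by
  obtain ⟨hvV, hvK⟩ := mem_sdiff.mp hv
  have hKv : insert v K ⊆ G.verts := insert_subset hvV hK.1
  have hstep := rank_induce_add_le_rank_induce_insert hr hext hG hK.1 hvV hvK hd
  have hrest := hK.rank_induce_add_le_rank hr hext hG (subset_insert v K) hKv
  have hrank := hK.2.1
  rw [Finset.card_sub_card_eq_card_sub_card_insert_add_one hvK hKv, Nat.mul_succ] at hrank
  exact ⟨hKv, by omega, fun K' hK' => hK.2.2 K' ((subset_insert v K).trans hK')⟩
end

section
/- Let G₀ be a semisimple graph and M a matroid on E(G₀) with rank function r having the d-dimensional 0-extension property. Suppose G = (V,E) ⊆ G₀ has minimum degree δ(G) ≥ d+2, and G has an M-seed K ⊆ V together with vertices u′, v′ ∈ V−K with u′v′ ∈ E and u′ ≠ v′. Then there exist vertices u, v ∈ V−K with uv ∈ E, u ≠ v, satisfying r(G) = r(G−u) + d = r(G−v) + d = r(G−u−v) + 2d. -/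
open Finset

variable {ν : Type*} [DecidableEq ν]

/-!
If `x ∉ S` has `d` neighbours in `S + x`, the 0-extension property adds `d` to the rank:
`r(G[S + x]) ≥ r(G[S]) + d`. Along the vertex orderings provided by a seed `K` this gives
`r(G[S]) + d·|V − S| ≤ r(G)` for all `K ⊆ S ⊆ V`, with equality at `S = K`; equality ("tightness")
passes from `S` to `S + x` for every such `x`. Since every vertex has at least `d + 1` neighbours,
a vertex with at most one neighbour outside `S + x` can always be added, and this lets us grow a
tight `S` while keeping a non-loop edge outside it until `V − S = {u, v}`; tightness of `S`,
`S + u` and `S + v` are then the three rank equalities.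
-/

namespace IsRankFn

variable {r : Finset (Sym2 ν) → ℕ}

theorem le_union (hr : IsRankFn r) (A C : Finset (Sym2 ν)) : r A ≤ r (A ∪ C) := by
  induction C using Finset.induction_on with
  | empty => simp
  | insert a C _ ih => rw [union_insert]; exact ih.trans (hr.le_insert _ _)

theorem exists_indep_subset_rank_eq (hr : IsRankFn r) (A : Finset (Sym2 ν)) :
    ∃ B ⊆ A, r B = B.card ∧ r B = r A := by
  induction A using Finset.induction_on with
  | empty => exact ⟨∅, subset_rfl, by simp [hr.empty], rfl⟩
  | insert a A haA ih =>
    obtain ⟨B, hBA, hBind, hBr⟩ := ih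
    by_cases hloop : r (insert a A) = r A
    · exact ⟨B, hBA.trans (subset_insert _ _), hBind, hBr.trans hloop.symm⟩
    · have haB : a ∉ B := fun h => haA (hBA h)
      -- submodularity for `insert a B` and `A`, which meet in `B` and span `insert a A`
      have hsub := hr.submodular (insert a B) A
      rw [insert_union, union_eq_right.2 hBA, insert_inter_of_notMem haA,
        inter_eq_left.2 hBA] at hsub
      have := hr.le_insert A a
      have := hr.insert_le A a
      have := hr.insert_le B a
      refine ⟨insert a B, insert_subset_insert a hBA, ?_, by omega⟩
      rw [card_insert_of_notMem haB]
      omega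

end IsRankFn

theorem Finset.le_card_inter_of_sdiff_subset_singleton {α : Type*} [DecidableEq α]
    {A T : Finset α} {y : α} {d : ℕ} (hA : d + 1 ≤ A.card) (hAT : A \ T ⊆ {y}) :
    d ≤ (T ∩ A).card := by
  have hle := card_le_card hAT
  rw [card_singleton] at hle
  have := card_inter_add_card_sdiff A T
  rw [inter_comm]
  omega

theorem Finset.card_sdiff_insert_of_mem {α : Type*} [DecidableEq α] {V S : Finset α} {x : α}
    (hx : x ∈ V \ S) : (V \ insert x S).card + 1 = (V \ S).card := by
  rw [sdiff_insert, card_erase_add_one hx]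

namespace SSGraph

theorem del_edges (G : SSGraph ν) (u : ν) : (G.del u).edges = G.induce (G.verts.erase u) := by
  ext e
  simp only [del, induce, mem_filter, mem_inter, mem_sym2_iff, mem_erase]
  exact ⟨fun ⟨he, hu⟩ => ⟨he, fun z hz => ⟨fun h => hu (h ▸ hz), G.incident e he z hz⟩⟩,
    fun ⟨he, hs⟩ => ⟨he, fun hu => (hs u hu).1 rfl⟩⟩

theorem del_del_edges (G : SSGraph ν) (u v : ν) :
    ((G.del u).del v).edges = G.induce ((G.verts.erase u).erase v) := by
  ext e
  simp only [induce, del, mem_filter, mem_inter, mem_sym2_iff, mem_erase]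
  have := G.incident e
  grind

theorem deg_le_card_nbrs (G : SSGraph ν) (x : ν) : G.deg x ≤ (G.nbrs x).card := by
  refine card_le_card_of_surjOn (fun y => s(x, y)) ?_
  intro e he
  obtain ⟨he, hx⟩ := mem_filter.1 he
  obtain ⟨y, rfl⟩ := Sym2.mem_iff_exists.1 hx
  exact ⟨y, mem_filter.2 ⟨G.incident _ he y (Sym2.mem_mk_right _ _), he⟩, rfl⟩

def zeroExt (G : SSGraph ν) (x : ν) (D : Finset ν) (hD : D ⊆ insert x G.verts) : SSGraph ν where
  verts := insert x G.verts
  edges := G.edges ∪ D.image (fun y => s(x, y))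
  incident := by
    intro e he z hz
    rcases mem_union.1 he with he | he
    · exact mem_insert_of_mem (G.incident e he z hz)
    · obtain ⟨y, hy, rfl⟩ := mem_image.1 he
      rcases Sym2.mem_iff.1 hz with rfl | rfl
      exacts [mem_insert_self _ _, hD hy]

theorem isZeroExt_zeroExt {G : SSGraph ν} {x : ν} {D : Finset ν} (hD : D ⊆ insert x G.verts)
    (hx : x ∉ G.verts) : IsZeroExt D.card G (G.zeroExt x D hD) :=
  ⟨x, hx, D, hD, rfl, rfl, rfl⟩

theorem card_zeroExt_edges {G : SSGraph ν} {x : ν} {D : Finset ν} (hD : D ⊆ insert x G.verts)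
    (hx : x ∉ G.verts) : (G.zeroExt x D hD).edges.card = G.edges.card + D.card := by
  have hdisj : Disjoint G.edges (D.image (fun y => s(x, y))) := by
    refine disjoint_right.2 fun e he heG => ?_
    obtain ⟨y, -, rfl⟩ := mem_image.1 he
    exact hx (G.incident _ heG x (Sym2.mem_mk_left _ _))
  rw [zeroExt, card_union_of_disjoint hdisj,
    card_image_of_injective _ fun _ _ h => Sym2.congr_right.1 h]

end SSGraph

open SSGraph

theorem ZeroExtProp.rank_induce_add_le {d : ℕ} {r : Finset (Sym2 ν) → ℕ} {G₀ G : SSGraph ν}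
    (hr : IsRankFn r) (hext : ZeroExtProp d r G₀) (hG : G.Sub G₀) {S : Finset ν} {x : ν}
    (hS : S ⊆ G.verts) (hx : x ∈ G.verts \ S) (hd : d ≤ (insert x S ∩ G.nbrs x).card) :
    r (G.induce S) + d ≤ r (G.induce (insert x S)) := by
  obtain ⟨hxV, hxS⟩ := mem_sdiff.1 hx
  obtain ⟨B, hB, hBind, hBr⟩ := hr.exists_indep_subset_rank_eq (G.induce S)
  obtain ⟨D, hD, rfl⟩ := exists_subset_card_eq hd
  let G₁ : SSGraph ν := ⟨S, B, fun e he => mem_sym2_iff.1 (mem_inter.1 (hB he)).2⟩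
  have hDins : D ⊆ insert x G₁.verts := fun y hy => (mem_inter.1 (hD hy)).1
  have hDnbrs : ∀ y ∈ D, s(x, y) ∈ G.edges := fun y hy => (mem_filter.1 (mem_inter.1 (hD hy)).2).2
  have hG₂G : (G₁.zeroExt x D hDins).edges ⊆ G.induce (insert x S) := by
    intro e he
    refine mem_inter.2 ⟨?_, mem_sym2_iff.2 ((G₁.zeroExt x D hDins).incident e he)⟩
    rcases mem_union.1 he with he | he
    · exact (mem_inter.1 (hB he)).1
    · obtain ⟨y, hy, rfl⟩ := mem_image.1 he
      exact hDnbrs y hy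
  have hG₁sub : G₁.Sub G₀ := ⟨hS.trans hG.1, fun e he => hG.2 (mem_inter.1 (hB he)).1⟩
  have hG₂sub : (G₁.zeroExt x D hDins).Sub G₀ :=
    ⟨insert_subset (hG.1 hxV) (hS.trans hG.1), fun e he => hG.2 (mem_inter.1 (hG₂G he)).1⟩
  have hind := hext G₁ _ hG₁sub hG₂sub hBind (isZeroExt_zeroExt hDins hxS)
  calc r (G.induce S) + D.card = r (G₁.zeroExt x D hDins).edges := by
        rw [hind, card_zeroExt_edges hDins hxS, ← hBr, hBind]
    _ ≤ r (G.induce (insert x S)) := hr.mono hG₂G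

section Seed

variable {d : ℕ} {r : Finset (Sym2 ν) → ℕ} {G₀ G : SSGraph ν} {K S : Finset ν}

theorem IsSeed.rank_induce_add_le (hr : IsRankFn r) (hext : ZeroExtProp d r G₀)
    (hG : G.Sub G₀) (hK : IsSeed d r G K) (hKS : K ⊆ S) (hSV : S ⊆ G.verts) :
    r (G.induce S) + d * (G.verts \ S).card ≤ r G.edges := by
  obtain ⟨n, hn⟩ : ∃ n, (G.verts \ S).card = n := ⟨_, rfl⟩
  induction n generalizing S with
  | zero =>
    have hVS : G.verts ⊆ S := sdiff_eq_empty_iff_subset.1 (card_eq_zero.1 hn)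
    rw [hn, subset_antisymm hSV hVS, induce_verts, mul_zero, add_zero]
  | succ n ih =>
    have hS : S ⊂ G.verts := ssubset_of_subset_of_ne hSV (by rintro rfl; simp at hn)
    obtain ⟨x, hx, hxadd⟩ := hK.2.2 S hKS hS
    have hstep := hext.rank_induce_add_le hr hG hSV hx hxadd
    have hcard : (G.verts \ insert x S).card = n := by
      have := card_sdiff_insert_of_mem hx; omega
    have hrest := ih (hKS.trans (subset_insert x S)) (insert_subset (mem_sdiff.1 hx).1 hSV) hcard
    rw [hcard] at hrest
    rw [hn, mul_add_one]
    omega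

/-- `S` is tight when the bound of `IsSeed.rank_induce_add_le` is attained. -/
def IsTight (d : ℕ) (r : Finset (Sym2 ν) → ℕ) (G : SSGraph ν) (K S : Finset ν) : Prop :=
  K ⊆ S ∧ S ⊆ G.verts ∧ r G.edges = r (G.induce S) + d * (G.verts \ S).card

theorem IsSeed.isTight (hK : IsSeed d r G K) : IsTight d r G K K :=
  ⟨subset_rfl, hK.1, by rw [card_sdiff_of_subset hK.1]; exact hK.2.1⟩

theorem IsTight.isTight_insert (hr : IsRankFn r) (hext : ZeroExtProp d r G₀) (hG : G.Sub G₀)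
    (hK : IsSeed d r G K) (hS : IsTight d r G K S) {x : ν} (hx : x ∈ G.verts \ S)
    (hd : d ≤ (insert x S ∩ G.nbrs x).card) : IsTight d r G K (insert x S) := by
  obtain ⟨hKS, hSV, htight⟩ := hS
  have hKS' := hKS.trans (subset_insert x S)
  have hSV' := insert_subset (mem_sdiff.1 hx).1 hSV
  have hstep := hext.rank_induce_add_le hr hG hSV hx hd
  have hle := hK.rank_induce_add_le hr hext hG hKS' hSV'
  have hcard := card_sdiff_insert_of_mem hx
  refine ⟨hKS', hSV', le_antisymm ?_ hle⟩
  rw [htight, ← hcard, mul_add_one]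
  omega

theorem IsTight.rank_eq_rank_del_add (hr : IsRankFn r) (hext : ZeroExtProp d r G₀)
    (hG : G.Sub G₀) (hK : IsSeed d r G K) (hnbrs : ∀ w ∈ G.verts, d + 1 ≤ (G.nbrs w).card)
    (hS : IsTight d r G K S) {x y : ν} (hVS : G.verts \ S = {x, y}) (hxy : x ≠ y) :
    r G.edges = r (G.del y).edges + d := by
  have hSV := hS.2.1
  have hmem (z : ν) : z ∈ G.verts ∧ z ∉ S ↔ z = x ∨ z = y := by
    simpa using congrArg (z ∈ ·) hVS
  have hx : x ∈ G.verts \ S := by simp [hVS]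
  have hd : d ≤ (insert x S ∩ G.nbrs x).card := by
    refine le_card_inter_of_sdiff_subset_singleton (y := y) (hnbrs x (mem_sdiff.1 hx).1)
      fun z hz => ?_
    simp only [nbrs, mem_sdiff, mem_filter, mem_insert] at hz
    grind
  have hrest : G.verts \ insert x S = {y} := by
    rw [sdiff_insert, hVS, erase_insert (by simpa using hxy)]
  have hdel : G.verts.erase y = insert x S := by
    ext z
    have := @hSV z
    grind
  have := (hS.isTight_insert hr hext hG hK hx hd).2.2
  rwa [hrest, card_singleton, mul_one, ← hdel, ← del_edges] at this

theorem IsTight.rank_del_pair (hr : IsRankFn r) (hext : ZeroExtProp d r G₀)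
    (hG : G.Sub G₀) (hK : IsSeed d r G K) (hnbrs : ∀ w ∈ G.verts, d + 1 ≤ (G.nbrs w).card)
    (hS : IsTight d r G K S) {x y : ν} (hVS : G.verts \ S = {x, y}) (hxy : x ≠ y) :
    r G.edges = r (G.del x).edges + d ∧ r G.edges = r (G.del y).edges + d ∧
      r G.edges = r ((G.del x).del y).edges + 2 * d := by
  refine ⟨hS.rank_eq_rank_del_add hr hext hG hK hnbrs (by rw [hVS, pair_comm]) hxy.symm,
    hS.rank_eq_rank_del_add hr hext hG hK hnbrs hVS hxy, ?_⟩
  have hmem (z : ν) : z ∈ G.verts ∧ z ∉ S ↔ z = x ∨ z = y := by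
    simpa using congrArg (z ∈ ·) hVS
  have hdel : (G.verts.erase x).erase y = S := by
    ext z
    have := @hS.2.1 z
    grind
  rw [hS.2.2, del_del_edges, hdel, hVS, card_pair hxy, mul_comm]

theorem IsSeed.exists_addable_keeping_edge (hK : IsSeed d r G K)
    (hnbrs : ∀ w ∈ G.verts, d + 1 ≤ (G.nbrs w).card) (hKS : K ⊆ S) (hSV : S ⊆ G.verts)
    (h3 : 3 ≤ (G.verts \ S).card) {x y : ν} (hx : x ∈ G.verts \ S) (hy : y ∈ G.verts \ S)
    (hxy : x ≠ y) (he : s(x, y) ∈ G.edges) :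
    ∃ z ∈ G.verts \ S, d ≤ (insert z S ∩ G.nbrs z).card ∧
      ∃ x' ∈ G.verts \ insert z S, ∃ y' ∈ G.verts \ insert z S, x' ≠ y' ∧ s(x', y') ∈ G.edges := by
  obtain ⟨w, hw, hwadd⟩ := hK.2.2 S hKS (ssubset_of_subset_of_ne hSV (by rintro rfl; simp at hx))
  by_cases hedge : ∃ x' ∈ G.verts \ insert w S, ∃ y' ∈ G.verts \ insert w S,
      x' ≠ y' ∧ s(x', y') ∈ G.edges
  · exact ⟨w, hw, hwadd, hedge⟩
  push Not at hedge
  have hwxy : w = x ∨ w = y := by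
    by_contra! h
    exact hedge x (by simp only [mem_sdiff, mem_insert] at hx ⊢; grind) y
      (by simp only [mem_sdiff, mem_insert] at hy ⊢; grind) hxy he
  obtain ⟨z, hz⟩ : (((G.verts \ S).erase x).erase y).Nonempty := by
    rw [← card_pos]
    have := pred_card_le_card_erase (s := G.verts \ S) (a := x)
    have := pred_card_le_card_erase (s := (G.verts \ S).erase x) (a := y)
    omega
  simp only [mem_erase] at hz
  -- once `w` is added no edge is left outside, so every neighbour of `z` outside `S + z` is `w`
  refine ⟨z, hz.2.2, le_card_inter_of_sdiff_subset_singleton (y := w)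
    (hnbrs z (mem_sdiff.1 hz.2.2).1) fun t ht => ?_, x, ?_, y, ?_, hxy, he⟩
  · simp only [nbrs, mem_sdiff, mem_filter, mem_insert, not_or] at ht
    by_contra htw
    exact hedge z (by simp only [mem_sdiff, mem_insert]; grind) t
      (by simp only [mem_sdiff, mem_insert]; grind) (Ne.symm ht.2.1) ht.1.2
  · simp only [mem_sdiff, mem_insert] at hx ⊢
    grind
  · simp only [mem_sdiff, mem_insert] at hy ⊢
    grind

theorem IsTight.exists_deletable_pair (hr : IsRankFn r) (hext : ZeroExtProp d r G₀)
    (hG : G.Sub G₀) (hK : IsSeed d r G K) (hnbrs : ∀ w ∈ G.verts, d + 1 ≤ (G.nbrs w).card)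
    (hS : IsTight d r G K S) {x y : ν} (hx : x ∈ G.verts \ S) (hy : y ∈ G.verts \ S)
    (hxy : x ≠ y) (he : s(x, y) ∈ G.edges) :
    ∃ u v : ν, u ∈ G.verts \ S ∧ v ∈ G.verts \ S ∧ u ≠ v ∧ s(u, v) ∈ G.edges ∧
      r G.edges = r (G.del u).edges + d ∧
      r G.edges = r (G.del v).edges + d ∧
      r G.edges = r ((G.del u).del v).edges + 2 * d := by
  obtain ⟨n, hn⟩ : ∃ n, (G.verts \ S).card = n := ⟨_, rfl⟩
  induction n using Nat.strong_induction_on generalizing S x y with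
  | _ n ih =>
  have hpair : {x, y} ⊆ G.verts \ S := insert_subset hx (singleton_subset_iff.2 hy)
  by_cases h2 : (G.verts \ S).card ≤ 2
  · have hVS := eq_of_subset_of_card_le hpair (by rw [card_pair hxy]; omega)
    exact ⟨x, y, hx, hy, hxy, he, hS.rank_del_pair hr hext hG hK hnbrs hVS.symm hxy⟩
  obtain ⟨z, hz, hzadd, x', hx', y', hy', hxy', he'⟩ :=
    hK.exists_addable_keeping_edge hnbrs hS.1 hS.2.1 (by omega) hx hy hxy he
  have hsub : G.verts \ insert z S ⊆ G.verts \ S :=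
    sdiff_subset_sdiff subset_rfl (subset_insert _ _)
  obtain ⟨u, v, hu, hv, huv⟩ := ih _ (by have := card_sdiff_insert_of_mem hz; omega)
    (hS.isTight_insert hr hext hG hK hz hzadd) hx' hy' hxy' he' rfl
  exact ⟨u, v, hsub hu, hsub hv, huv⟩

end Seed

/-- if `δ(G) ≥ d+2` and `G` has an `M`-seed `K` together with an edge
`u′v′` with `u′,v′ ∈ V − K`, `u′ ≠ v′`, then there are `u,v ∈ V − K` with `uv ∈ E`,
`u ≠ v` and `r(G) = r(G−u)+d = r(G−v)+d = r(G−u−v)+2d`. -/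
theorem deletable_vertices
    {ν : Type*} [DecidableEq ν] (d : ℕ) (G₀ : SSGraph ν)
    (r : Finset (Sym2 ν) → ℕ) (hr : IsRankFn r) (hext : ZeroExtProp d r G₀)
    (G : SSGraph ν) (hG : G.Sub G₀)
    (hδ : ∀ w ∈ G.verts, d + 2 ≤ G.deg w)
    (K : Finset ν) (hK : IsSeed d r G K)
    (u' v' : ν) (hu' : u' ∈ G.verts \ K) (hv' : v' ∈ G.verts \ K)
    (hne' : u' ≠ v') (he' : s(u', v') ∈ G.edges) :
    ∃ u v : ν, u ∈ G.verts \ K ∧ v ∈ G.verts \ K ∧ u ≠ v ∧ s(u, v) ∈ G.edges ∧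
      r G.edges = r (G.del u).edges + d ∧
      r G.edges = r (G.del v).edges + d ∧
      r G.edges = r ((G.del u).del v).edges + 2 * d := by
  have hnbrs (w : ν) (hw : w ∈ G.verts) : d + 1 ≤ (G.nbrs w).card := by
    have := G.deg_le_card_nbrs w
    have := hδ w hw
    omega
  exact hK.isTight.exists_deletable_pair hr hext hG hK hnbrs hu' hv' hne' he'
end

section
/- Let d ≥ 2 and let G = (V,E) be a graph on n ≥ 10⁵d² vertices with minimum degree δ(G) ≥ (n+d−1)/2. Then there exists a set X₀ ⊆ V with |X₀| < n/(12d) such that every vertex v ∈ V has at least d neighbours in X₀. -/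
open Finset

/-!
Instead of a random set with independent choices, take `X` uniformly among the `k`-subsets,
`k = ⌊n/(13d)⌋`, and shrink every neighbourhood to exactly `m = ⌊(n+d)/2⌋` vertices. The number
of `k`-sets meeting a fixed `m`-set in fewer than `d` points is at most `∑_{i<d} T i` with
`T i = C(m,i) C(n-m,k-i)`, so a union bound over the `n` vertices leaves a good `X` once
`n ∑_{i<d} T i < C(n,k)`. Since `k ≥ 2√n` and `4 (i + 1) ≤ √n`, the ratio `T (i+1) / T i` is at
least `2` for all `i < d + L` with `L = 4(⌊n^{1/4}⌋ + 1)`; hence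
`2^L ∑_{i<d} T i ≤ T (d + L) ≤ C(n,k)`, and `n < 2^L`.
-/

section Counting

variable {α : Type*} [Fintype α] [DecidableEq α]

lemma card_powersetCard_filter_card_inter_eq_le (A : Finset α) (k i : ℕ) :
    #{X ∈ univ.powersetCard k | #(A ∩ X) = i} ≤
      (#A).choose i * (Fintype.card α - #A).choose (k - i) := by
  calc #{X ∈ univ.powersetCard k | #(A ∩ X) = i}
      ≤ #(A.powersetCard i ×ˢ Aᶜ.powersetCard (k - i)) := by
        refine card_le_card_of_injOn (fun X ↦ (A ∩ X, X \ A)) (fun X hX ↦ ?_)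
          fun X _ Y _ hXY ↦ ?_
        · simp only [coe_filter, mem_powersetCard_univ, Set.mem_ofPred_eq] at hX
          have hsplit := card_sdiff_add_card_inter X A
          rw [inter_comm] at hsplit
          simp only [coe_product, Set.mem_prod, mem_coe, mem_powersetCard]
          exact ⟨⟨inter_subset_left, hX.2⟩, fun x hx ↦ mem_compl.2 (mem_sdiff.1 hx).2, by omega⟩
        · simp only [Prod.mk.injEq] at hXY
          rw [← sdiff_union_inter X A, ← sdiff_union_inter Y A, inter_comm X, inter_comm Y,
            hXY.1, hXY.2]
    _ = _ := by rw [card_product, card_powersetCard, card_powersetCard, card_compl]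

lemma card_powersetCard_filter_card_inter_lt_le (A : Finset α) (k d : ℕ) :
    #{X ∈ univ.powersetCard k | #(A ∩ X) < d} ≤
      ∑ i ∈ range d, (#A).choose i * (Fintype.card α - #A).choose (k - i) := by
  rw [card_eq_sum_card_fiberwise (f := fun X ↦ #(A ∩ X)) (t := range d)
    fun X hX ↦ mem_range.2 (mem_filter.1 hX).2]
  refine sum_le_sum fun i _ ↦ (card_le_card fun X hX ↦ ?_).trans
    (card_powersetCard_filter_card_inter_eq_le A k i)
  simp only [mem_filter] at hX ⊢
  exact ⟨hX.1.1, hX.2⟩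

lemma exists_card_eq_forall_le_card_inter {ι : Type*} [Fintype ι] (A : ι → Finset α)
    {m k d : ℕ} (hA : ∀ v, #(A v) = m)
    (h : Fintype.card ι * ∑ i ∈ range d, m.choose i * (Fintype.card α - m).choose (k - i) <
      (Fintype.card α).choose k) :
    ∃ X : Finset α, #X = k ∧ ∀ v, d ≤ #(A v ∩ X) := by
  by_contra! hbad
  have hcover : univ.powersetCard k ⊆
      univ.biUnion fun v ↦ {X ∈ univ.powersetCard k | #(A v ∩ X) < d} := by
    intro X hX
    obtain ⟨v, hv⟩ := hbad X (mem_powersetCard_univ.1 hX)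
    exact mem_biUnion.2 ⟨v, mem_univ v, mem_filter.2 ⟨hX, hv⟩⟩
  refine h.not_ge ?_
  calc (Fintype.card α).choose k = #(univ.powersetCard k : Finset (Finset α)) := by
        rw [card_powersetCard, card_univ]
    _ ≤ ∑ v, #{X ∈ univ.powersetCard k | #(A v ∩ X) < d} :=
        (card_le_card hcover).trans card_biUnion_le
    _ ≤ ∑ _v : ι, ∑ i ∈ range d, m.choose i * (Fintype.card α - m).choose (k - i) :=
        sum_le_sum fun v _ ↦ hA v ▸ card_powersetCard_filter_card_inter_lt_le (A v) k d
    _ = _ := by rw [sum_const, card_univ, smul_eq_mul]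

end Counting

lemma sum_range_le_of_two_mul_le {f : ℕ → ℕ} {d : ℕ} (h : ∀ i < d, 2 * f i ≤ f (i + 1)) :
    ∑ i ∈ range d, f i ≤ f d := by
  induction d with
  | zero => simp
  | succ d ih =>
    have hsum := ih fun i hi ↦ h i (by omega)
    have hd := h d (by omega)
    rw [sum_range_succ]
    omega

lemma two_pow_mul_sum_range_le {f : ℕ → ℕ} {d L : ℕ} (h : ∀ i < d + L, 2 * f i ≤ f (i + 1)) :
    2 ^ L * ∑ i ∈ range d, f i ≤ f (d + L) := by
  induction L with
  | zero => simpa using sum_range_le_of_two_mul_le fun i hi ↦ h i (by omega)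
  | succ L ih =>
    calc 2 ^ (L + 1) * ∑ i ∈ range d, f i = 2 * (2 ^ L * ∑ i ∈ range d, f i) := by ring
      _ ≤ 2 * f (d + L) := Nat.mul_le_mul_left 2 (ih fun i hi ↦ h i (by omega))
      _ ≤ f (d + (L + 1)) := h (d + L) (by omega)

lemma choose_mul_choose_sub_le_add_choose (m a : ℕ) {i k : ℕ} (hik : i ≤ k) :
    m.choose i * a.choose (k - i) ≤ (m + a).choose k := by
  rw [Nat.add_choose_eq]
  exact single_le_sum (f := fun p : ℕ × ℕ ↦ m.choose p.1 * a.choose p.2) (a := (i, k - i))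
    (fun _ _ ↦ Nat.zero_le _)
    (HasAntidiagonal.mem_antidiagonal.2 (Nat.add_sub_cancel' hik))

lemma two_mul_choose_mul_choose_le {m a k i : ℕ} (hik : i < k)
    (h : 2 * (i + 1) * a ≤ (m - i) * (k - i)) :
    2 * (m.choose i * a.choose (k - i)) ≤ m.choose (i + 1) * a.choose (k - (i + 1)) := by
  obtain ⟨j, rfl⟩ : ∃ j, k = i + 1 + j := ⟨k - (i + 1), by omega⟩
  rw [show i + 1 + j - i = j + 1 by omega] at h ⊢
  rw [show i + 1 + j - (i + 1) = j by omega]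
  refine Nat.le_of_mul_le_mul_right ?_ (Nat.mul_pos i.succ_pos j.succ_pos)
  calc 2 * (m.choose i * a.choose (j + 1)) * ((i + 1) * (j + 1))
      = m.choose i * a.choose j * (2 * (i + 1) * (a - j)) := by
        rw [show 2 * (m.choose i * a.choose (j + 1)) * ((i + 1) * (j + 1)) =
          2 * m.choose i * (i + 1) * (a.choose (j + 1) * (j + 1)) by ring,
          Nat.choose_succ_right_eq]
        ring
    _ ≤ m.choose i * a.choose j * ((m - i) * (j + 1)) :=
        Nat.mul_le_mul_left _ ((Nat.mul_le_mul_left _ (Nat.sub_le a j)).trans h)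
    _ = m.choose (i + 1) * a.choose j * ((i + 1) * (j + 1)) := by
        rw [show m.choose (i + 1) * a.choose j * ((i + 1) * (j + 1)) =
          m.choose (i + 1) * (i + 1) * a.choose j * (j + 1) by ring,
          Nat.choose_succ_right_eq]
        ring

lemma lt_two_pow_four_mul_sqrt_sqrt_add_one (n : ℕ) : n < 2 ^ (4 * (n.sqrt.sqrt + 1)) := by
  set s := n.sqrt
  set r := s.sqrt
  have hs : s + 1 ≤ (r + 1) ^ 2 := Nat.lt_succ_sqrt' s
  calc n < (s + 1) ^ 2 := Nat.lt_succ_sqrt' n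
    _ ≤ ((r + 1) ^ 2) ^ 2 := Nat.pow_le_pow_left hs 2
    _ = (r + 1) ^ 4 := by ring
    _ < (2 ^ (r + 1)) ^ 4 := Nat.pow_lt_pow_left Nat.lt_two_pow_self (by norm_num)
    _ = 2 ^ (4 * (r + 1)) := by ring

lemma two_mul_succ_mul_sub_le {n m k i s : ℕ} (hm : n ≤ 2 * m) (hi : 4 * (i + 1) ≤ s)
    (hsn : s ≤ n) (hsk : s + i ≤ k) :
    2 * (i + 1) * (n - m) ≤ (m - i) * (k - i) := by
  have hP : n ≤ 4 * (m - i) := by omega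
  have hQ : s ≤ k - i := by omega
  have h2a : 2 * (n - m) ≤ n := by omega
  calc 2 * (i + 1) * (n - m) = (i + 1) * (2 * (n - m)) := by ring
    _ ≤ (i + 1) * n := Nat.mul_le_mul_left _ h2a
    _ ≤ (i + 1) * (4 * (m - i)) := Nat.mul_le_mul_left _ hP
    _ = 4 * (i + 1) * (m - i) := by ring
    _ ≤ (k - i) * (m - i) := Nat.mul_le_mul_right _ (hi.trans hQ)
    _ = (m - i) * (k - i) := by ring

lemma four_mul_add_le_sqrt {n d : ℕ} (hd : 2 ≤ d) (hn : 10 ^ 5 * d ^ 2 ≤ n) :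
    4 * (d + 4 * (n.sqrt.sqrt + 1)) ≤ n.sqrt := by
  set s := n.sqrt
  set r := s.sqrt
  have hds : 316 * d ≤ s := Nat.le_sqrt.2 (by nlinarith)
  have hr : 25 ≤ r := Nat.le_sqrt.2 (by omega)
  have hrs : 25 * r ≤ s := (Nat.mul_le_mul_right r hr).trans (Nat.sqrt_le s)
  omega

lemma two_mul_sqrt_le_div {n d : ℕ} (hd : 0 < d) (hn : 10 ^ 5 * d ^ 2 ≤ n) :
    2 * n.sqrt ≤ n / (13 * d) := by
  set s := n.sqrt
  have hds : 316 * d ≤ s := Nat.le_sqrt.2 (by nlinarith)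
  have hlt : d * (316 * s) < d * (13 * (n / (13 * d) + 1)) :=
    calc d * (316 * s) = 316 * d * s := by ring
      _ ≤ s * s := Nat.mul_le_mul_right s hds
      _ ≤ n := Nat.sqrt_le n
      _ < 13 * d * (n / (13 * d) + 1) := Nat.lt_mul_div_succ n (by omega)
      _ = d * (13 * (n / (13 * d) + 1)) := by ring
  have := Nat.lt_of_mul_lt_mul_left hlt
  omega

lemma card_mul_sum_lt_choose {n d : ℕ} (hd : 2 ≤ d) (hn : 10 ^ 5 * d ^ 2 ≤ n) :
    n * ∑ i ∈ range d, ((n + d) / 2).choose i * (n - (n + d) / 2).choose (n / (13 * d) - i) <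
      n.choose (n / (13 * d)) := by
  set m := (n + d) / 2
  set k := n / (13 * d)
  set L := 4 * (n.sqrt.sqrt + 1)
  set f : ℕ → ℕ := fun i ↦ m.choose i * (n - m).choose (k - i)
  have hL := four_mul_add_le_sqrt hd hn
  have hk := two_mul_sqrt_le_div (by omega) hn
  have hsn := Nat.sqrt_le_self n
  have hdoubling : ∀ i < d + L, 2 * f i ≤ f (i + 1) := fun i hi ↦
    two_mul_choose_mul_choose_le (by omega)
      (two_mul_succ_mul_sub_le (by omega) (by omega) hsn (by omega))
  have hchoose : f (d + L) ≤ n.choose k := by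
    simpa only [f, Nat.add_sub_cancel' (show m ≤ n by omega)] using
      choose_mul_choose_sub_le_add_choose m (n - m) (show d + L ≤ k by omega)
  rcases (∑ i ∈ range d, f i).eq_zero_or_pos with hzero | hpos
  · rw [hzero, mul_zero]
    exact Nat.choose_pos (Nat.div_le_self n _)
  · calc n * ∑ i ∈ range d, f i < 2 ^ L * ∑ i ∈ range d, f i :=
          Nat.mul_lt_mul_of_pos_right (lt_two_pow_four_mul_sqrt_sqrt_add_one n) hpos
      _ ≤ f (d + L) := two_pow_mul_sum_range_le hdoubling
      _ ≤ n.choose k := hchoose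

/-- if `d ≥ 2` and `G` is a graph on `n ≥ 10⁵d²` vertices with
minimum degree at least `(n+d−1)/2`, then there is a set `X₀` of fewer than
`n/(12d)` vertices such that every vertex has at least `d` neighbours in `X₀`. -/
theorem exists_dominating_set
    {ν : Type*} [Fintype ν] [DecidableEq ν] (d : ℕ) (hd : 2 ≤ d)
    (G : SimpleGraph ν) [DecidableRel G.Adj]
    (hn : 10 ^ 5 * d ^ 2 ≤ Fintype.card ν)
    (hδ : ∀ v : ν, Fintype.card ν + d - 1 ≤ 2 * G.degree v) :
    ∃ X₀ : Finset ν, 12 * d * X₀.card < Fintype.card ν ∧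
      ∀ v : ν, d ≤ (G.neighborFinset v ∩ X₀).card := by
  set n := Fintype.card ν
  have hdeg : ∀ v, (n + d) / 2 ≤ #(G.neighborFinset v) := fun v ↦ by
    have := hδ v
    rw [G.card_neighborFinset_eq_degree]
    omega
  choose A hAG hAm using fun v ↦ exists_subset_card_eq (hdeg v)
  obtain ⟨X, hXk, hX⟩ := exists_card_eq_forall_le_card_inter A hAm (card_mul_sum_lt_choose hd hn)
  refine ⟨X, ?_, fun v ↦ (hX v).trans (card_le_card (inter_subset_inter_right (hAG v)))⟩
  have hk : 0 < n / (13 * d) := Nat.div_pos (by nlinarith) (by omega)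
  have := Nat.div_mul_le_self n (13 * d)
  rw [hXk]
  nlinarith
end

section
/- Let G = (V,E) be a critically k-biconnected bipartite graph. Then every vertex cover of G has size at least |V|/(2k²), i.e., τ(G) ≥ |V|/(2k²). -/
/-- `(A, B)` is a bipartition of the graph `G`. -/
def SimpleGraph.IsBipartitionOf {V : Type*} (G : SimpleGraph V) (A B : Set V) : Prop :=
  A ∪ B = Set.univ ∧ Disjoint A B ∧ ∀ u v, G.Adj u v → (u ∈ A ↔ v ∈ B)

/-- A bipartite graph `G` with bipartition `(A,B)` is `k`-biconnected if `|A|,|B| ≥ k` and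
`G − W` is connected for every `W` with `|W ∩ A| ≤ k−1` and `|W ∩ B| ≤ k−1`. -/
def Biconn {V : Type*} [Finite V] (k : ℕ) (G : SimpleGraph V) (A B : Set V) : Prop :=
  G.IsBipartitionOf A B ∧ k ≤ Nat.card A ∧ k ≤ Nat.card B ∧
  ∀ W : Set V, Nat.card ↥(W ∩ A) < k → Nat.card ↥(W ∩ B) < k →
    (G.induce Wᶜ).Connected

/-- `G` is critically `k`-biconnected: `k`-biconnected, but no vertex-deleted subgraph is. -/
def CritBiconn {V : Type*} [Finite V] (k : ℕ) (G : SimpleGraph V) (A B : Set V) : Prop :=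
  Biconn k G A B ∧
  ∀ v : V, ¬ Biconn k (G.induce {v}ᶜ) (Subtype.val ⁻¹' A) (Subtype.val ⁻¹' B)

/-- `G` is `k`-connected: more than `k` vertices, and `G − W` is connected whenever `|W| < k`. -/
def KConn {V : Type*} [Finite V] (k : ℕ) (G : SimpleGraph V) : Prop :=
  k < Nat.card V ∧ ∀ W : Set V, Nat.card W < k → (G.induce Wᶜ).Connected

/-- `G` is critically `k`-connected. -/
def CritKConn {V : Type*} [Finite V] (k : ℕ) (G : SimpleGraph V) : Prop :=
  KConn k G ∧ ∀ v : V, ¬ KConn k (G.induce {v}ᶜ)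

/-- `C` is a vertex cover of `G`. -/
def IsVertexCover {V : Type*} (G : SimpleGraph V) (C : Set V) : Prop :=
  ∀ u v, G.Adj u v → u ∈ C ∨ v ∈ C

/-!
For `u ∈ A` with `|A| > k`, criticality yields `W`, with fewer than `k` vertices on each side,
such that `G - u - W` is disconnected while `G - W` is connected; so `u` has neighbours on both
sides `F`, `M` of a separation with separator `{u} ∪ W`. The vertices of `A` whose neighbourhood
lies in a set `T ⊆ B` then split into those in `F` (neighbourhood in `T \ M`), those in `M`
(neighbourhood in `T \ F`) and at most `k` in the separator, and induction on `|T|` bounds their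
number by `g |T|`, where `g = neighborhoodBound k` has slope at most `2k`. For a vertex cover `C`,
every vertex of `A \ C` has its neighbourhood in `C ∩ B` and symmetrically, so
`|V| ≤ |C| + g |C ∩ B| + g |C ∩ A| ≤ 2k²|C|`. Taking `T = B` shows that `|A| > k` forces
`|B| > k`; otherwise `|A| = |B| = k` and the bound is immediate.
-/

open Set

namespace SimpleGraph

variable {V : Type*} {G : SimpleGraph V}

lemma exists_adj_of_induce_connected {S F : Set V} (hS : (G.induce S).Connected) {x y : V}
    (hx : x ∈ S) (hxF : x ∈ F) (hy : y ∈ S) (hyF : y ∉ F) :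
    ∃ a ∈ S, a ∈ F ∧ ∃ b ∈ S, b ∉ F ∧ G.Adj a b := by
  obtain ⟨p⟩ := hS.preconnected ⟨x, hx⟩ ⟨y, hy⟩
  obtain ⟨d, -, hd₁, hd₂⟩ := p.exists_boundary_dart {z | z.1 ∈ F} hxF hyF
  exact ⟨d.fst, d.fst.2, hd₁, d.snd, d.snd.2, hd₂, d.adj⟩

lemma exists_separation_of_not_preconnected {S : Set V} (h : ¬ (G.induce S).Preconnected) :
    ∃ F M : Set V, F ∪ M = S ∧ Disjoint F M ∧ F.Nonempty ∧ M.Nonempty ∧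
      ∀ f ∈ F, ∀ m ∈ M, ¬ G.Adj f m := by
  obtain ⟨x, y, hxy⟩ : ∃ x y, ¬ (G.induce S).Reachable x y := by
    simpa [Preconnected] using h
  refine ⟨(↑) '' {z | (G.induce S).Reachable x z}, (↑) '' {z | (G.induce S).Reachable x z}ᶜ,
    ?_, ?_, ⟨x, x, .refl x, rfl⟩, ⟨y, y, hxy, rfl⟩, ?_⟩
  · rw [← image_union, union_compl_self, image_univ, Subtype.range_coe]
  · exact (disjoint_image_iff Subtype.val_injective).2 disjoint_compl_right
  · rintro _ ⟨f, hf, rfl⟩ _ ⟨m, hm, rfl⟩ hfm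
    exact hm (hf.trans (Adj.reachable (G := G.induce S) hfm))

lemma induce_induce_connected_iff {s : Set V} {t : Set s} :
    ((G.induce s).induce t).Connected ↔ (G.induce (Subtype.val '' t)).Connected := by
  let e : (G.induce s).induce t ↪g G := (Embedding.induce t).trans (Embedding.induce s)
  have he : range e = Subtype.val '' t := by
    change range (Subtype.val ∘ Subtype.val) = _
    rw [range_comp, Subtype.range_coe]
  rw [(Embedding.isoInduceRange e).connected_iff, he]

lemma IsBipartitionOf.symm {A B : Set V} (h : G.IsBipartitionOf A B) : G.IsBipartitionOf B A :=
  ⟨union_comm A B ▸ h.1, h.2.1.symm, fun u v huv => (h.2.2 v u huv.symm).symm⟩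

lemma IsBipartitionOf.induce {A B : Set V} (h : G.IsBipartitionOf A B) (s : Set V) :
    (G.induce s).IsBipartitionOf (Subtype.val ⁻¹' A) (Subtype.val ⁻¹' B) :=
  ⟨by rw [← preimage_union, h.1, preimage_univ], h.2.1.preimage _, fun u v huv => h.2.2 u v huv⟩

lemma IsBipartitionOf.notMem_right {A B : Set V} (h : G.IsBipartitionOf A B) {u : V}
    (hu : u ∈ A) : u ∉ B :=
  h.2.1.notMem_of_mem_left hu

lemma IsBipartitionOf.neighborSet_subset {A B : Set V} (h : G.IsBipartitionOf A B) {u : V}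
    (hu : u ∈ A) : G.neighborSet u ⊆ B :=
  fun _ huv => (h.2.2 u _ huv).1 hu

lemma IsBipartitionOf.ncard_inter_add_ncard_inter [Finite V] {A B : Set V}
    (h : G.IsBipartitionOf A B) (S : Set V) : (S ∩ A).ncard + (S ∩ B).ncard = S.ncard := by
  rw [← ncard_union_eq (h.2.1.mono inter_subset_right inter_subset_right),
    ← inter_union_distrib_left, h.1, inter_univ]

end SimpleGraph

lemma IsVertexCover.neighborSet_subset {V : Type*} {G : SimpleGraph V} {C : Set V}
    (hC : IsVertexCover G C) {u : V} (hu : u ∉ C) : G.neighborSet u ⊆ C :=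
  fun v huv => (hC u v huv).resolve_left hu

def NeighborsSeparated {V : Type*} (G : SimpleGraph V) (k : ℕ) (X Y : Set V) (u : V) : Prop :=
  ∃ F M : Set V, Disjoint F M ∧ (∀ f ∈ F, ∀ m ∈ M, ¬ G.Adj f m) ∧
    (G.neighborSet u ∩ F).Nonempty ∧ (G.neighborSet u ∩ M).Nonempty ∧
    ((F ∪ M)ᶜ ∩ X).ncard ≤ k ∧ ((F ∪ M)ᶜ ∩ Y).ncard < k

-- In `hg`, `a`, `b` and `s` stand for the sizes of `T \ M`, `T \ F` and `T \ (F ∪ M)`.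
lemma ncard_le_of_neighborsSeparated {V : Type*} [Finite V] {G : SimpleGraph V} {k : ℕ}
    {X Y : Set V} (g : ℕ → ℕ)
    (hg : ∀ a b s t, a < t → b < t → s < k → k ≤ t → a + b = t + s → g a + g b + k ≤ g t)
    (hdeg : ∀ u ∈ X, k ≤ (G.neighborSet u).ncard)
    (hsep : ∀ u ∈ X, NeighborsSeparated G k X Y u) {T : Set V} (hT : T ⊆ Y) :
    {u ∈ X | G.neighborSet u ⊆ T}.ncard ≤ g T.ncard := by
  induction hn : T.ncard using Nat.strong_induction_on generalizing T with
  | _ t ih =>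
  set U := {u ∈ X | G.neighborSet u ⊆ T}
  obtain hU | ⟨u, huX, huT⟩ := U.eq_empty_or_nonempty
  · rw [hU, ncard_empty]
    exact Nat.zero_le _
  obtain ⟨F, M, hdisj, hcross, ⟨f, hfu, hf⟩, ⟨m, hmu, hm⟩, hSX, hSY⟩ := hsep u huX
  have hUF : U ∩ F ⊆ {w ∈ X | G.neighborSet w ⊆ T \ M} :=
    fun w ⟨⟨hwX, hwT⟩, hwF⟩ => ⟨hwX, fun z hz => ⟨hwT hz, fun hzM => hcross w hwF z hzM hz⟩⟩
  have hUM : U ∩ M ⊆ {w ∈ X | G.neighborSet w ⊆ T \ F} :=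
    fun w ⟨⟨hwX, hwT⟩, hwM⟩ => ⟨hwX, fun z hz => ⟨hwT hz, fun hzF => hcross z hzF w hwM hz.symm⟩⟩
  have hUS : U \ (F ∪ M) ⊆ (F ∪ M)ᶜ ∩ X := fun w ⟨hwU, hw⟩ => ⟨hw, hwU.1⟩
  have hTM : (T \ M).ncard < t := hn ▸ ncard_lt_ncard (sdiff_ssubset_left_iff.2 ⟨m, huT hmu, hm⟩)
  have hTF : (T \ F).ncard < t := hn ▸ ncard_lt_ncard (sdiff_ssubset_left_iff.2 ⟨f, huT hfu, hf⟩)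
  have hTS : (T \ (F ∪ M)).ncard < k := by
    refine (ncard_le_ncard ?_).trans_lt hSY
    exact fun z ⟨hzT, hz⟩ => ⟨hz, hT hzT⟩
  have hkt : k ≤ t := hn ▸ (hdeg u huX).trans (ncard_le_ncard huT)
  have hsum : (T \ M).ncard + (T \ F).ncard = t + (T \ (F ∪ M)).ncard := by
    rw [← hn, ← ncard_union_add_ncard_inter]
    congr 2
    · ext z
      simp only [mem_union, mem_sdiff]
      have := hdisj.notMem_of_mem_left (a := z)
      tauto
    · ext z
      simp only [mem_inter_iff, mem_sdiff, mem_union]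
      tauto
  calc U.ncard = (U ∩ (F ∪ M)).ncard + (U \ (F ∪ M)).ncard :=
        (ncard_inter_add_ncard_sdiff_eq_ncard _ _).symm
    _ ≤ (U ∩ F).ncard + (U ∩ M).ncard + ((F ∪ M)ᶜ ∩ X).ncard := by
        rw [inter_union_distrib_left]
        exact add_le_add (ncard_union_le _ _) (ncard_le_ncard hUS)
    _ ≤ g (T \ M).ncard + g (T \ F).ncard + k := by
        gcongr
        · exact (ncard_le_ncard hUF).trans (ih _ hTM (sdiff_subset.trans hT) rfl)
        · exact (ncard_le_ncard hUM).trans (ih _ hTF (sdiff_subset.trans hT) rfl)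
    _ ≤ g t := hg _ _ _ _ hTM hTF hTS hkt hsum

-- For `k = 1` the separator misses `Y`, which is what allows slope `1` instead of `2k`.
def neighborhoodBound (k t : ℕ) : ℕ :=
  if t < k then 0 else if k = 1 then t - 1 else 2 * k * (t - k) + k

lemma neighborhoodBound_add_add_le {k a b s t : ℕ} (ha : a < t) (hb : b < t) (hs : s < k)
    (hkt : k ≤ t) (hab : a + b = t + s) :
    neighborhoodBound k a + neighborhoodBound k b + k ≤ neighborhoodBound k t := by
  have hmul (x : ℕ) (hx : x + 1 ≤ t - k) : 2 * k * x + 2 * k ≤ 2 * k * (t - k) := by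
    simpa [Nat.mul_add] using Nat.mul_le_mul_left (2 * k) hx
  unfold neighborhoodBound
  rw [if_neg (not_lt.2 hkt)]
  split_ifs <;> try omega
  · have := hmul (b - k) (by omega); omega
  · have := hmul (a - k) (by omega); omega
  · have := hmul (a - k + (b - k)) (by omega); rw [Nat.mul_add] at this; omega

lemma neighborhoodBound_self_le (k : ℕ) : neighborhoodBound k k ≤ k := by
  unfold neighborhoodBound
  split_ifs <;> simp

lemma neighborhoodBound_add_le {k : ℕ} (hk : k ≠ 0) (t : ℕ) :
    neighborhoodBound k t + t ≤ 2 * k ^ 2 * t := by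
  have hpos : 0 < 2 * k ^ 2 := by positivity
  unfold neighborhoodBound
  split_ifs with hkt hk1
  · simpa using Nat.le_mul_of_pos_left t hpos
  · subst hk1; omega
  · have h₁ : 2 * k * (t - k) + k ≤ 2 * k * t := by
      have := Nat.mul_le_mul_left (2 * k) (show t - k + 1 ≤ t by omega)
      rw [Nat.mul_add] at this; omega
    have h₂ : (2 * k + 1) * t ≤ 2 * k ^ 2 * t :=
      Nat.mul_le_mul_right _ (by nlinarith [show 2 ≤ k by omega])
    nlinarith

section Biconn

variable {V : Type*} [Finite V] {G : SimpleGraph V} {A B : Set V} {k : ℕ}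

lemma Biconn.symm (h : Biconn k G A B) : Biconn k G B A :=
  ⟨h.1.symm, h.2.2.1, h.2.1, fun W hWB hWA => h.2.2.2 W hWA hWB⟩

lemma CritBiconn.symm (h : CritBiconn k G A B) : CritBiconn k G B A :=
  ⟨h.1.symm, fun v hv => h.2 v hv.symm⟩

lemma Biconn.exists_mem_right_notMem (h : Biconn k G A B) {W : Set V}
    (hW : (W ∩ B).ncard < k) : ∃ b ∈ B, b ∉ W := by
  obtain ⟨b, hb, hbW⟩ := exists_mem_notMem_of_ncard_lt_ncard (hW.trans_le h.2.2.1)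
  exact ⟨b, hb, fun hb' => hbW ⟨hb', hb⟩⟩

lemma Biconn.le_ncard_neighborSet_of_mem_left (h : Biconn k G A B) (hk : k ≠ 0) {v : V}
    (hv : v ∈ A) : k ≤ (G.neighborSet v).ncard := by
  -- Otherwise `G - N(v)` would be connected with `v` isolated in it.
  by_contra! hlt
  set W := G.neighborSet v
  have hWA : (W ∩ A).ncard < k := by
    rw [(h.1.2.1.symm.mono_left (h.1.neighborSet_subset hv)).inter_eq, ncard_empty]
    exact Nat.pos_of_ne_zero hk
  have hWB : (W ∩ B).ncard < k := (ncard_le_ncard inter_subset_left).trans_lt hlt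
  obtain ⟨b, hb, hbW⟩ := h.exists_mem_right_notMem hWB
  have hbv : b ∉ ({v} : Set V) := fun hbv => h.1.notMem_right hv (mem_singleton_iff.1 hbv ▸ hb)
  obtain ⟨a, -, rfl, c, hc, -, hac⟩ :=
    SimpleGraph.exists_adj_of_induce_connected (F := {v}) (h.2.2.2 W hWA hWB)
      (G.irrefl (v := v)) (mem_singleton v) hbW hbv
  exact hc hac

lemma Biconn.le_ncard_neighborSet (h : Biconn k G A B) (hk : k ≠ 0) (v : V) :
    k ≤ (G.neighborSet v).ncard := by
  rcases (h.1.1 ▸ mem_univ v : v ∈ A ∪ B) with hv | hv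
  · exact h.le_ncard_neighborSet_of_mem_left hk hv
  · exact h.symm.le_ncard_neighborSet_of_mem_left hk hv

lemma CritBiconn.exists_separator (h : CritBiconn k G A B) {u : V} (hu : u ∈ A)
    (hA : k < A.ncard) :
    ∃ W : Set V, u ∉ W ∧ (W ∩ A).ncard < k ∧ (W ∩ B).ncard < k ∧
      ¬ (G.induce (insert u W)ᶜ).Connected := by
  have hcard {W' : Set ({u}ᶜ : Set V)} {X : Set V} :
      Nat.card ↥(W' ∩ Subtype.val ⁻¹' X) = (Subtype.val '' W' ∩ X).ncard := by
    rw [← image_inter_preimage, ncard_image_of_injective _ Subtype.val_injective]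
    rfl
  have hcard_preimage (X : Set V) :
      Nat.card ↥(Subtype.val ⁻¹' X : Set ({u}ᶜ : Set V)) = (X \ {u}).ncard := by
    rw [sdiff_eq, inter_comm, ← Subtype.image_preimage_coe,
      ncard_image_of_injective _ Subtype.val_injective]
    rfl
  have hA' : k ≤ Nat.card ↥(Subtype.val ⁻¹' A : Set ({u}ᶜ : Set V)) := by
    rw [hcard_preimage, ncard_sdiff_singleton_of_mem hu]
    omega
  have hB' : k ≤ Nat.card ↥(Subtype.val ⁻¹' B : Set ({u}ᶜ : Set V)) := by
    rw [hcard_preimage, sdiff_singleton_eq_self (h.1.1.notMem_right hu)]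
    exact h.1.2.2.1
  obtain ⟨W', hWA, hWB, hW⟩ : ∃ W' : Set ({u}ᶜ : Set V),
      Nat.card ↥(W' ∩ Subtype.val ⁻¹' A) < k ∧ Nat.card ↥(W' ∩ Subtype.val ⁻¹' B) < k ∧
        ¬ ((G.induce {u}ᶜ).induce W'ᶜ).Connected := by
    by_contra! hall
    exact h.2 u ⟨h.1.1.induce _, hA', hB', hall⟩
  refine ⟨Subtype.val '' W', fun ⟨z, _, hz⟩ => z.2 hz, hcard ▸ hWA, hcard ▸ hWB, ?_⟩
  rwa [SimpleGraph.induce_induce_connected_iff, image_val_compl, sdiff_eq_compl_inter,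
    inter_comm, ← compl_union, ← insert_eq] at hW

lemma CritBiconn.neighborsSeparated (h : CritBiconn k G A B) {u : V} (hu : u ∈ A)
    (hA : k < A.ncard) : NeighborsSeparated G k A B u := by
  obtain ⟨W, huW, hWA, hWB, hW⟩ := h.exists_separator hu hA
  have hconn : (G.induce Wᶜ).Connected := h.1.2.2.2 W hWA hWB
  obtain ⟨b, hb, hbW⟩ := h.1.exists_mem_right_notMem hWB
  have hbu : b ≠ u := fun hbu => h.1.1.notMem_right hu (hbu ▸ hb)
  have hpre : ¬ (G.induce (insert u W)ᶜ).Preconnected := fun hp =>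
    hW ((SimpleGraph.connected_iff _).2 ⟨hp, ⟨⟨b, by simp [hbu, hbW]⟩⟩⟩)
  obtain ⟨F, M, hFM, hdisj, hF, hM, hcross⟩ :=
    SimpleGraph.exists_separation_of_not_preconnected hpre
  -- `u` reconnects the two sides in `G - W`, so it has a neighbour on each.
  have hnbr {P Q : Set V} (hPQ : P ∪ Q = (insert u W)ᶜ) (hP : P.Nonempty)
      (hcross : ∀ p ∈ P, ∀ q ∈ Q, ¬ G.Adj p q) : (G.neighborSet u ∩ P).Nonempty := by
    obtain ⟨p, hp⟩ := hP
    have hsub : P ⊆ Wᶜ := fun x hx => ((hPQ ▸ Or.inl hx : x ∈ (insert u W)ᶜ) <| Or.inr ·)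
    have huP : u ∉ P := fun huP => (hPQ ▸ Or.inl huP : u ∈ (insert u W)ᶜ) (mem_insert u W)
    obtain ⟨a, -, haP, c, hcW, hcP, hac⟩ :=
      SimpleGraph.exists_adj_of_induce_connected hconn (hsub hp) hp huW huP
    obtain rfl : c = u := by
      by_contra hcu
      have : c ∈ P ∪ Q := hPQ ▸ fun hc => (mem_insert_iff.1 hc).elim hcu hcW
      exact this.elim hcP (hcross a haP c · hac)
    exact ⟨a, hac.symm, haP⟩
  have hsep : (F ∪ M)ᶜ = insert u W := by rw [hFM, compl_compl]
  refine ⟨F, M, hdisj, hcross, hnbr hFM hF hcross,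
    hnbr ((union_comm M F).trans hFM) hM fun m hm f hf hmf => hcross f hf m hm hmf.symm, ?_, ?_⟩
  · rw [hsep, insert_inter_of_mem hu]
    exact (ncard_insert_le _ _).trans hWA
  · rwa [hsep, insert_inter_of_notMem (h.1.1.notMem_right hu)]

lemma CritBiconn.isEmpty_of_zero (h : CritBiconn 0 G A B) : IsEmpty V :=
  ⟨fun v => h.2 v ⟨h.1.1.induce _, Nat.zero_le _, Nat.zero_le _, fun _ hW => absurd hW (by simp)⟩⟩

lemma CritBiconn.ncard_setOf_neighborSet_subset_le (h : CritBiconn k G A B) (hk : k ≠ 0)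
    (hA : k < A.ncard) {T : Set V} (hT : T ⊆ B) :
    {u ∈ A | G.neighborSet u ⊆ T}.ncard ≤ neighborhoodBound k T.ncard :=
  ncard_le_of_neighborsSeparated _ (fun _ _ _ _ => neighborhoodBound_add_add_le)
    (fun u _ => h.1.le_ncard_neighborSet hk u) (fun _ hu => h.neighborsSeparated hu hA) hT

lemma CritBiconn.lt_ncard_right (h : CritBiconn k G A B) (hk : k ≠ 0) (hA : k < A.ncard) :
    k < B.ncard := by
  by_contra! hB
  have hsub : A ⊆ {u ∈ A | G.neighborSet u ⊆ B} := fun u hu => ⟨hu, h.1.1.neighborSet_subset hu⟩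
  have hAB := (ncard_le_ncard hsub).trans (h.ncard_setOf_neighborSet_subset_le hk hA subset_rfl)
  rw [le_antisymm hB h.1.2.2.1] at hAB
  have := neighborhoodBound_self_le k
  omega

lemma CritBiconn.card_le_of_lt_ncard (h : CritBiconn k G A B) (hk : k ≠ 0) (hA : k < A.ncard)
    (hB : k < B.ncard) {C : Set V} (hC : IsVertexCover G C) :
    Nat.card V ≤ 2 * k ^ 2 * C.ncard := by
  have hbip := h.1.1
  have hsubA : A \ C ⊆ {u ∈ A | G.neighborSet u ⊆ C ∩ B} := fun u ⟨hu, huC⟩ =>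
    ⟨hu, fun _ huv => ⟨hC.neighborSet_subset huC huv, hbip.neighborSet_subset hu huv⟩⟩
  have hsubB : B \ C ⊆ {u ∈ B | G.neighborSet u ⊆ C ∩ A} := fun u ⟨hu, huC⟩ =>
    ⟨hu, fun _ huv => ⟨hC.neighborSet_subset huC huv, hbip.symm.neighborSet_subset hu huv⟩⟩
  have hAC := (ncard_le_ncard hsubA).trans
    (h.ncard_setOf_neighborSet_subset_le hk hA inter_subset_right)
  have hBC := (ncard_le_ncard hsubB).trans
    (h.symm.ncard_setOf_neighborSet_subset_le hk hB inter_subset_right)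
  have hCc : Cᶜ.ncard ≤ (A \ C).ncard + (B \ C).ncard := by
    rw [compl_eq_univ_sdiff, ← hbip.1, union_sdiff_distrib]
    exact ncard_union_le _ _
  have hCA := neighborhoodBound_add_le hk (C ∩ A).ncard
  have hCB := neighborhoodBound_add_le hk (C ∩ B).ncard
  calc Nat.card V = (C ∩ A).ncard + (C ∩ B).ncard + Cᶜ.ncard := by
        rw [hbip.ncard_inter_add_ncard_inter, ncard_add_ncard_compl]
    _ ≤ 2 * k ^ 2 * (C ∩ A).ncard + 2 * k ^ 2 * (C ∩ B).ncard := by omega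
    _ = 2 * k ^ 2 * C.ncard := by rw [← Nat.mul_add, hbip.ncard_inter_add_ncard_inter]

lemma CritBiconn.card_le_of_ncard_le (h : CritBiconn k G A B) (hk : k ≠ 0) (hA : A.ncard ≤ k)
    {C : Set V} (hC : IsVertexCover G C) : Nat.card V ≤ 2 * k ^ 2 * C.ncard := by
  have hB : B.ncard ≤ k := not_lt.1 fun hB => (h.symm.lt_ncard_right hk hB).not_ge hA
  have hkA : k ≤ A.ncard := h.1.2.1
  obtain ⟨a, -⟩ : A.Nonempty := nonempty_of_ncard_ne_zero (by omega)
  obtain ⟨b, hab⟩ : (G.neighborSet a).Nonempty :=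
    nonempty_of_ncard_ne_zero (by have := h.1.le_ncard_neighborSet hk a; omega)
  have hC₁ : 1 ≤ C.ncard := (ncard_pos).2 <| (hC a b hab).elim (⟨a, ·⟩) (⟨b, ·⟩)
  calc Nat.card V = A.ncard + B.ncard := by
        rw [← ncard_univ, ← h.1.1.ncard_inter_add_ncard_inter univ, univ_inter, univ_inter]
    _ ≤ 2 * k ^ 2 * 1 := by nlinarith [Nat.one_le_iff_ne_zero.2 hk]
    _ ≤ 2 * k ^ 2 * C.ncard := Nat.mul_le_mul_left _ hC₁

end Biconn

/-- every vertex cover of a critically `k`-biconnected bipartite graph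
has size at least `|V|/(2k²)`. -/
theorem tau_bound_crit_biconn {V : Type*} [Finite V] (k : ℕ)
    (G : SimpleGraph V) (A B : Set V) (h : CritBiconn k G A B)
    (C : Set V) (hC : IsVertexCover G C) :
    Nat.card V ≤ 2 * k ^ 2 * Nat.card C := by
  obtain rfl | hk := eq_or_ne k 0
  · have := h.isEmpty_of_zero
    simp
  obtain hA | hA := lt_or_ge k A.ncard
  · exact h.card_le_of_lt_ncard hk hA (h.lt_ncard_right hk hA) hC
  · exact h.card_le_of_ncard_le hk hA hC
end

section
/- In the setting of the proof of Theorem 5.1: let G be a critically k-biconnected bipartite graph with |A|,|B| ≥ k+1, let T be a minimum vertex cover, X = V−T, let f be a pairing for X, let F be the simplification of the edge multiset E^f_X, and let G⁺ = G[T] ∪ F. Then for each edge uv ∈ F, the maximum number of pairwise internally disjoint u–v paths in G⁺ is at most 2k−1. -/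
/-- An essential separator of the `k`-biconnected bipartite graph `G`. -/
def IsEssSep {V : Type*} [Finite V] (k : ℕ) (G : SimpleGraph V) (A B S : Set V) : Prop :=
  ((Nat.card ↥(S ∩ A) = k ∧ Nat.card ↥(S ∩ B) ≤ k - 1) ∨
   (Nat.card ↥(S ∩ B) = k ∧ Nat.card ↥(S ∩ A) ≤ k - 1)) ∧
  ¬ (G.induce Sᶜ).Connected ∧
  ∀ x ∈ S, ∀ y : ↥Sᶜ, ∃ z : ↥Sᶜ, (G.induce Sᶜ).Reachable y z ∧ G.Adj x ↑z

/-- `f` behaves as a pairing at `x`. -/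
def PairingAt {V : Type*} [Finite V] (k : ℕ) (G : SimpleGraph V) (A B : Set V)
    (f : V → V × V) (x : V) : Prop :=
  ∃ S : Set V, IsEssSep k G A B S ∧ x ∈ S ∧
    G.Adj x (f x).1 ∧ G.Adj x (f x).2 ∧
    ∃ (h1 : (f x).1 ∈ Sᶜ) (h2 : (f x).2 ∈ Sᶜ),
      ¬ (G.induce Sᶜ).Reachable ⟨(f x).1, h1⟩ ⟨(f x).2, h2⟩

/-- There exist `m` pairwise internally disjoint `u`–`v` paths in `G`. -/
def IntDisjPaths {V : Type*} (G : SimpleGraph V) (u v : V) (m : ℕ) : Prop :=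
  ∃ P : Fin m → G.Path u v, Function.Injective P ∧
    ∀ i j, i ≠ j → ∀ w, w ∈ (P i).val.support → w ∈ (P j).val.support → w = u ∨ w = v

namespace SimpleGraph.Walk

variable {V : Type*} {G H : SimpleGraph V} {u v : V}

theorem IsPath.eq_of_mem_edges_of_internallyDisjoint {p q : G.Walk u v} (hp : p.IsPath)
    (hq : q.IsPath) (hdisj : ∀ w ∈ p.support, w ∈ q.support → w = u ∨ w = v) {e : Sym2 V}
    (hep : e ∈ p.edges) (heq : e ∈ q.edges) : p = q := by
  induction e using Sym2.ind with
  | _ a b =>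
    have ha := hdisj a (p.fst_mem_support_of_mem_edges hep) (q.fst_mem_support_of_mem_edges heq)
    have hb := hdisj b (p.snd_mem_support_of_mem_edges hep) (q.snd_mem_support_of_mem_edges heq)
    have hab : s(a, b) = s(u, v) := by
      have hne := (p.adj_of_mem_edges hep).ne
      rcases ha with rfl | rfl <;> rcases hb with rfl | rfl
      exacts [(hne rfl).elim, rfl, Sym2.eq_swap, (hne rfl).elim]
    rw [hab] at hep heq
    rw [hp.eq_adj_toWalk_of_mem_edges hep, hq.eq_adj_toWalk_of_mem_edges heq]

theorem reachable_induce_of_forall_mem_edges {U : Set V} (p : H.Walk u v)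
    (hp : ∀ z ∈ p.support, z ∈ U)
    (hstep : ∀ x y (hx : x ∈ U) (hy : y ∈ U), s(x, y) ∈ p.edges →
      (G.induce U).Reachable ⟨x, hx⟩ ⟨y, hy⟩) :
    (G.induce U).Reachable ⟨u, hp u p.start_mem_support⟩ ⟨v, hp v p.end_mem_support⟩ := by
  induction p with
  | nil => rfl
  | cons h q ih =>
    refine (hstep _ _ _ _ (by simp)).trans (ih (fun z hz => hp z (by simp [hz])) ?_)
    exact fun x y hx hy he => hstep x y hx hy (by simp [he])

end SimpleGraph.Walk

lemma IsEssSep.card_le {V : Type*} [Finite V] {k : ℕ} {G : SimpleGraph V} {A B S : Set V}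
    (hAB : G.IsBipartitionOf A B) (hS : IsEssSep k G A B S) : Nat.card S ≤ 2 * k - 1 := by
  have hB : B = Aᶜ := (IsCompl.compl_eq ⟨hAB.2.1, codisjoint_iff.2 hAB.1⟩).symm
  have hsplit : (S ∩ A).ncard + (S ∩ B).ncard = S.ncard := by
    rw [hB, ← Set.sdiff_eq]
    exact Set.ncard_inter_add_ncard_sdiff_eq_ncard S A
  rw [Nat.card_coe_set_eq, ← hsplit]
  rcases hS.1 with ⟨h1, h2⟩ | ⟨h1, h2⟩ <;> rw [Nat.card_coe_set_eq] at h1 h2 <;> omega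

lemma PairingAt.exists_separating {V : Type*} [Finite V] {k : ℕ} {G : SimpleGraph V}
    {A B : Set V} {f : V → V × V} {x u v : V} (h : PairingAt k G A B f x)
    (huv : s(u, v) = s((f x).1, (f x).2)) :
    ∃ S, IsEssSep k G A B S ∧
      ∃ (hu : u ∈ Sᶜ) (hv : v ∈ Sᶜ), ¬ (G.induce Sᶜ).Reachable ⟨u, hu⟩ ⟨v, hv⟩ := by
  obtain ⟨S, hS, -, -, -, h1, h2, hsep⟩ := h
  refine ⟨S, hS, ?_⟩
  rcases Sym2.eq_iff.1 huv with ⟨rfl, rfl⟩ | ⟨rfl, rfl⟩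
  exacts [⟨h1, h2, hsep⟩, ⟨h2, h1, fun hr => hsep hr.symm⟩]

section PlusGraph

open SimpleGraph (fromEdgeSet fromEdgeSet_adj induce_adj Adj.reachable)

variable {V : Type*} {G : SimpleGraph V} {T : Set V} {f : V → V × V}

/-- The edge set `F`. -/
def pairEdges (T : Set V) (f : V → V × V) : Set (Sym2 V) :=
  {e | ∃ x ∈ Tᶜ, e = s((f x).1, (f x).2)}

/-- The graph `G⁺ = G[T] ∪ F`. -/
def plusGraph (G : SimpleGraph V) (T : Set V) (f : V → V × V) : SimpleGraph V :=
  fromEdgeSet ({e ∈ G.edgeSet | ∀ x ∈ e, x ∈ T} ∪ pairEdges T f)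

def Meets {H : SimpleGraph V} {u v : V} (T : Set V) (f : V → V × V) (p : H.Walk u v) (z : V) :
    Prop :=
  z ∈ p.support ∨ (z ∉ T ∧ s((f z).1, (f z).2) ∈ p.edges)

lemma adj_of_mem_pair (hfadj : ∀ x ∉ T, G.Adj x (f x).1 ∧ G.Adj x (f x).2) {w x : V}
    (hw : w ∉ T) (hx : x ∈ s((f w).1, (f w).2)) : G.Adj w x := by
  rcases Sym2.mem_iff.1 hx with rfl | rfl
  exacts [(hfadj w hw).1, (hfadj w hw).2]

lemma mem_cover_of_plusGraph_adj (hTvc : IsVertexCover G T)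
    (hfadj : ∀ x ∉ T, G.Adj x (f x).1 ∧ G.Adj x (f x).2) {x y : V}
    (h : (plusGraph G T f).Adj x y) : x ∈ T := by
  rcases ((fromEdgeSet_adj _).1 h).1 with ⟨-, hT⟩ | ⟨w, hw, hwxy⟩
  · exact hT x (Sym2.mem_mk_left x y)
  · have hwx : G.Adj w x := adj_of_mem_pair hfadj hw (hwxy ▸ Sym2.mem_mk_left x y)
    exact (hTvc w x hwx).resolve_left hw

lemma mem_cover_of_mem_support (hTvc : IsVertexCover G T)
    (hfadj : ∀ x ∉ T, G.Adj x (f x).1 ∧ G.Adj x (f x).2) {u v z : V}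
    (p : (plusGraph G T f).Walk u v) (hz : z ∈ p.support) (hzv : z ≠ v) : z ∈ T := by
  obtain ⟨e, he, hze⟩ := (SimpleGraph.Walk.mem_support_iff_exists_mem_edges.1 hz).resolve_left hzv
  obtain ⟨y, rfl⟩ := Sym2.mem_iff_exists.1 hze
  exact mem_cover_of_plusGraph_adj hTvc hfadj (p.adj_of_mem_edges he)

lemma reachable_of_plusGraph_adj (hfadj : ∀ x ∉ T, G.Adj x (f x).1 ∧ G.Adj x (f x).2)
    {S : Set V} {x y : V} (h : (plusGraph G T f).Adj x y) (hx : x ∈ Sᶜ) (hy : y ∈ Sᶜ)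
    (hS : ∀ w ∈ S, w ∉ T → s(x, y) ≠ s((f w).1, (f w).2)) :
    (G.induce Sᶜ).Reachable ⟨x, hx⟩ ⟨y, hy⟩ := by
  rcases ((fromEdgeSet_adj _).1 h).1 with ⟨hG, -⟩ | ⟨w, hw, hwxy⟩
  · exact Adj.reachable (induce_adj.2 hG)
  · -- the path `x w y` through the witness of the pair replaces the edge
    have hwS : w ∈ Sᶜ := fun hwS => hS w hwS hw hwxy
    have hwx : G.Adj w x := adj_of_mem_pair hfadj hw (hwxy ▸ Sym2.mem_mk_left x y)
    have hwy : G.Adj w y := adj_of_mem_pair hfadj hw (hwxy ▸ Sym2.mem_mk_right x y)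
    exact (Adj.reachable (G := G.induce Sᶜ) (v := ⟨w, hwS⟩) (induce_adj.2 hwx.symm)).trans
      (Adj.reachable (induce_adj.2 hwy))

lemma exists_meets_of_not_reachable (hfadj : ∀ x ∉ T, G.Adj x (f x).1 ∧ G.Adj x (f x).2)
    {S : Set V} {u v : V} (hu : u ∈ Sᶜ) (hv : v ∈ Sᶜ)
    (hsep : ¬ (G.induce Sᶜ).Reachable ⟨u, hu⟩ ⟨v, hv⟩) (p : (plusGraph G T f).Walk u v) :
    ∃ z ∈ S, Meets T f p z := by
  by_contra! hcross
  refine hsep (p.reachable_induce_of_forall_mem_edges (fun z hz hzS => hcross z hzS (.inl hz)) ?_)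
  intro x y hx hy he
  exact reachable_of_plusGraph_adj hfadj (p.adj_of_mem_edges he) hx hy
    fun w hwS hw hwxy => hcross w hwS (.inr ⟨hw, hwxy ▸ he⟩)

/-- A common vertex would be internal, a vertex lies in `T` while a pair witness does not, and a
common pair is a shared edge. -/
lemma eq_of_meets_of_internallyDisjoint (hTvc : IsVertexCover G T)
    (hfadj : ∀ x ∉ T, G.Adj x (f x).1 ∧ G.Adj x (f x).2) {u v z : V}
    {p q : (plusGraph G T f).Walk u v} (hp : p.IsPath) (hq : q.IsPath)
    (hdisj : ∀ w ∈ p.support, w ∈ q.support → w = u ∨ w = v) (hzu : z ≠ u) (hzv : z ≠ v)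
    (hzp : Meets T f p z) (hzq : Meets T f q z) : p = q := by
  rcases hzp with hzp | ⟨hzT, hep⟩ <;> rcases hzq with hzq | ⟨hzT', heq⟩
  · exact ((hdisj z hzp hzq).elim hzu hzv).elim
  · exact (hzT' (mem_cover_of_mem_support hTvc hfadj p hzp hzv)).elim
  · exact (hzT (mem_cover_of_mem_support hTvc hfadj q hzq hzv)).elim
  · exact hp.eq_of_mem_edges_of_internallyDisjoint hq hdisj hep heq

end PlusGraph

theorem local_connectivity_bound_in_Gplus_general {V : Type*} [Finite V] (k : ℕ)
    (G : SimpleGraph V) (A B : Set V) (hcrit : CritBiconn k G A B)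
    (T : Set V) (hTvc : IsVertexCover G T)
    (f : V → V × V) (hf : ∀ x ∈ Tᶜ, PairingAt k G A B f x)
    (F : Set (Sym2 V)) (hF : F = {e | ∃ x ∈ Tᶜ, e = s((f x).1, (f x).2)})
    (Gplus : SimpleGraph V)
    (hGplus : Gplus = SimpleGraph.fromEdgeSet ({e ∈ G.edgeSet | ∀ x ∈ e, x ∈ T} ∪ F))
    (u v : V) (huv : s(u, v) ∈ F)
    (m : ℕ) (hm : IntDisjPaths Gplus u v m) :
    m ≤ 2 * k - 1 := by
  subst hF hGplus
  obtain ⟨P, hPinj, hPdisj⟩ : IntDisjPaths (plusGraph G T f) u v m := hm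
  obtain ⟨x₀, hx₀, hx₀uv⟩ := huv
  obtain ⟨S, hS, hu, hv, hsep⟩ := (hf x₀ hx₀).exists_separating hx₀uv
  have hfadj : ∀ x ∉ T, G.Adj x (f x).1 ∧ G.Adj x (f x).2 := fun x hx =>
    let ⟨_, _, _, h1, h2, _⟩ := hf x hx; ⟨h1, h2⟩
  choose g hgS hg using fun i => exists_meets_of_not_reachable hfadj hu hv hsep (P i).val
  have hg_inj : Function.Injective fun i => (⟨g i, hgS i⟩ : S) := by
    intro i j hij
    have hgij : g i = g j := congrArg Subtype.val hij
    by_contra hne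
    have hgu : g i ≠ u := fun h => hu (h ▸ hgS i)
    have hgv : g i ≠ v := fun h => hv (h ▸ hgS i)
    exact hne <| hPinj <| Subtype.ext <| eq_of_meets_of_internallyDisjoint hTvc hfadj
      (P i).2 (P j).2 (hPdisj i j hne) hgu hgv (hg i) (hgij ▸ hg j)
  calc m = Nat.card (Fin m) := (Nat.card_fin m).symm
    _ ≤ Nat.card S := Nat.card_le_card_of_injective _ hg_inj
    _ ≤ 2 * k - 1 := hS.card_le hcrit.1.1

/-- in the setting of the proof of Theorem 5.1, with `G` critically
`k`-biconnected, `T` a minimum vertex cover, `X = V − T`, `f` a pairing for `X`,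
`F` the set of distinct pairs arising from `f`, and `G⁺ = G[T] ∪ F`, every edge
`uv ∈ F` admits at most `2k − 1` pairwise internally disjoint `u`–`v` paths in `G⁺`. -/
theorem local_connectivity_bound_in_Gplus {V : Type*} [Finite V] (k : ℕ)
    (G : SimpleGraph V) (A B : Set V) (hcrit : CritBiconn k G A B)
    (hA : k + 1 ≤ Nat.card A) (hB : k + 1 ≤ Nat.card B)
    (T : Set V) (hTvc : IsVertexCover G T)
    (hTmin : ∀ C : Set V, IsVertexCover G C → T.ncard ≤ C.ncard)
    (f : V → V × V) (hf : ∀ x ∈ Tᶜ, PairingAt k G A B f x)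
    (F : Set (Sym2 V)) (hF : F = {e | ∃ x ∈ Tᶜ, e = s((f x).1, (f x).2)})
    (Gplus : SimpleGraph V)
    (hGplus : Gplus = SimpleGraph.fromEdgeSet ({e ∈ G.edgeSet | ∀ x ∈ e, x ∈ T} ∪ F))
    (u v : V) (huv : s(u, v) ∈ F)
    (m : ℕ) (hm : IntDisjPaths Gplus u v m) :
    m ≤ 2 * k - 1 :=
  local_connectivity_bound_in_Gplus_general k G A B hcrit T hTvc f hf F hF Gplus hGplus u v huv m hm
end

section
/- Let d ≥ 1 and let G = (V,E) be a simple H_d-independent graph, i.e., the rows of the matrix H(G,p) indexed by E are linearly independent for a generic p : V → ℝ^d. Let G′ be obtained from G by adding a new vertex v joined to d vertices v₁,…,v_d of V (a simple 0-extension). Then G′ is H_d-independent. -/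
open Classical

/-- `p` is generic: the multiset of all coordinates of the points `p v` is
algebraically independent over `ℚ`. -/
def Generic (d : ℕ) {ν : Type*} (p : ν → Fin d → ℝ) : Prop :=
  AlgebraicIndependent ℚ (fun vi : ν × Fin d => p vi.1 vi.2)

/-- The row of the hyperconnectivity matrix corresponding to an edge with first
endpoint `a` and second endpoint `b`: it has `p b` in the block of columns of `a`,
`−p a` in the block of columns of `b`, and `0` elsewhere. -/
noncomputable def hRow (d : ℕ) {ν : Type*} (p : ν → Fin d → ℝ) (a b : ν) :
    ν × Fin d → ℝ :=
  fun wi => (if wi.1 = a then p b wi.2 else 0) + (if wi.1 = b then -(p a wi.2) else 0)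

/-- The row of the hyperconnectivity matrix of an edge `e`, with the endpoints
ordered by the fixed linear order on the vertices. -/
noncomputable def eRow (d : ℕ) {ν : Type*} [LinearOrder ν] (p : ν → Fin d → ℝ)
    (e : Sym2 ν) : ν × Fin d → ℝ :=
  hRow d p
    (Sym2.lift ⟨fun a b => min a b, fun a b => min_comm a b⟩ e)
    (Sym2.lift ⟨fun a b => max a b, fun a b => max_comm a b⟩ e)

/-- The rows of `H(G,p)` indexed by the edges of `G` are linearly independent. -/
def HIndep (d : ℕ) {ν : Type*} [LinearOrder ν] (G : SimpleGraph ν)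
    (p : ν → Fin d → ℝ) : Prop :=
  LinearIndependent ℝ (fun e : G.edgeSet => eRow d p e.1)

/-!
Restrict every row of `H(G', p)` to the `d` columns of the new vertex `v`. The rows of the old
edges vanish there, since `v` is isolated in `G`, while the row of a new edge `vu` becomes `±p(u)`.
For generic `p` the `d` points `p(u)`, `u ∈ D`, are linearly independent: the determinant of the
matrix of their coordinates is a nonzero polynomial in algebraically independent reals. Hence the
new rows are independent modulo the span of the old ones, which are independent by hypothesis.
-/

theorem Matrix.det_ne_zero_of_algebraicIndependent {R K n : Type*} [CommRing R] [Nontrivial R]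
    [CommRing K] [Algebra R K] [Fintype n] [DecidableEq n] {M : Matrix n n K}
    (hM : AlgebraicIndependent R fun ij : n × n => M ij.1 ij.2) : M.det ≠ 0 := by
  have hX : (MvPolynomial.aeval fun ij : n × n => M ij.1 ij.2).mapMatrix
      (Matrix.mvPolynomialX n n R) = M := by
    ext; simp
  rw [← hX, ← AlgHom.map_det]
  exact (map_ne_zero_iff _ hM).mpr (Matrix.det_mvPolynomialX_ne_zero n R)

theorem Generic.linearIndepOn {d : ℕ} {ν : Type*} {p : ν → Fin d → ℝ} (hp : Generic d p)
    {D : Finset ν} (hD : D.card = d) : LinearIndepOn ℝ p D := by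
  let e : Fin d ≃ D := (D.equivFinOfCardEq hD).symm
  have hinj : Function.Injective fun ij : Fin d × Fin d => ((e ij.1 : ν), ij.2) :=
    fun a b h => by
      simp only [Prod.mk.injEq, Subtype.val_inj, e.injective.eq_iff] at h
      exact Prod.ext h.1 h.2
  have hM : AlgebraicIndependent ℚ fun ij : Fin d × Fin d => p (e ij.1) ij.2 :=
    hp.comp (fun ij : Fin d × Fin d => ((e ij.1 : ν), ij.2)) hinj
  exact (linearIndependent_equiv e).mp
    (Matrix.linearIndependent_rows_of_det_ne_zero (A := Matrix.of fun i j => p (e i) j)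
      (Matrix.det_ne_zero_of_algebraicIndependent hM))

theorem LinearIndepOn.union_of_comp_eq_zero {R M M' ι : Type*} [Ring R] [AddCommGroup M]
    [Module R M] [AddCommGroup M'] [Module R M'] {f : ι → M} {s t : Set ι} (π : M →ₗ[R] M')
    (hs : LinearIndepOn R f s) (hπs : ∀ i ∈ s, π (f i) = 0) (ht : LinearIndepOn R (π ∘ f) t) :
    LinearIndepOn R f (s ∪ t) := by
  have hker : Submodule.span R (f '' s) ≤ LinearMap.ker π :=
    Submodule.span_le.mpr (by rintro _ ⟨i, hi, rfl⟩; exact hπs i hi)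
  exact hs.union_of_quotient (ht.of_comp (Submodule.liftQ _ π hker))

theorem eRow_apply_of_notMem (d : ℕ) {ν : Type*} [LinearOrder ν] (p : ν → Fin d → ℝ)
    {a : ν} {e : Sym2 ν} (ha : a ∉ e) (i : Fin d) : eRow d p e (a, i) = 0 := by
  induction e using Sym2.ind with
  | _ b c =>
    simp only [Sym2.mem_iff, not_or] at ha
    have hmin : a ≠ min b c := by rcases min_choice b c with h | h <;> simp [h, ha]
    have hmax : a ≠ max b c := by rcases max_choice b c with h | h <;> simp [h, ha]
    simp [eRow, hRow, hmin, hmax]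

theorem eRow_apply_left (d : ℕ) {ν : Type*} [LinearOrder ν] (p : ν → Fin d → ℝ)
    {a b : ν} (hab : a ≠ b) (i : Fin d) :
    eRow d p s(a, b) (a, i) = (if a < b then 1 else -1) * p b i := by
  rcases hab.lt_or_gt with h | h
  · simp [eRow, hRow, h, h.le, hab]
  · simp [eRow, hRow, h.le, h.not_gt, hab]

theorem hIndep_zero_extension_general {ν : Type*} [LinearOrder ν] (d : ℕ)
    (G : SimpleGraph ν)
    (hG : ∀ p : ν → Fin d → ℝ, Generic d p → HIndep d G p)
    (v : ν) (hv : ∀ w, ¬ G.Adj v w)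
    (D : Finset ν) (hD : D.card = d) (hvD : v ∉ D)
    (G' : SimpleGraph ν)
    (hG' : G' = G ⊔ SimpleGraph.fromEdgeSet {e | ∃ u ∈ D, e = s(v, u)}) :
    ∀ p : ν → Fin d → ℝ, Generic d p → HIndep d G' p := by
  intro p hp
  -- Reading off the columns of `v` kills every row of `G` and sends the row of `s(v, u)` to `±p u`.
  let π := LinearMap.funLeft ℝ ℝ fun i : Fin d => (v, i)
  have hold : ∀ e ∈ G.edgeSet, π (eRow d p e) = 0 := fun e he => funext fun i =>
    eRow_apply_of_notMem d p (fun hve => hv _ (G.incidence_other_prop ⟨he, hve⟩)) i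
  have hnew : LinearIndepOn ℝ (π ∘ eRow d p) {e | ∃ u ∈ D, e = s(v, u)} := by
    have hstar : {e | ∃ u ∈ D, e = s(v, u)} = (fun u => s(v, u)) '' D := by
      ext; simp [eq_comm]
    rw [hstar]
    refine LinearIndepOn.image_of_comp _ _ ?_
    show LinearIndependent ℝ fun u : (D : Set ν) => π (eRow d p s(v, u))
    convert (hp.linearIndepOn hD).units_smul
      (fun u : (D : Set ν) => if v < u then 1 else -1) using 1
    funext u i
    have hvu : v ≠ u := fun h => hvD (h ▸ u.2)
    rcases hvu.lt_or_gt with h | h <;> simp [π, eRow_apply_left d p hvu, h, h.not_gt]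
  subst hG'
  rw [HIndep, SimpleGraph.edgeSet_sup, SimpleGraph.edgeSet_fromEdgeSet]
  exact LinearIndepOn.union_of_comp_eq_zero π (hG p hp) hold (hnew.mono Set.sdiff_subset)

/-- a simple 0-extension (adding a new vertex `v` joined to `d`
vertices of `V`) preserves `H_d`-independence. -/
theorem hIndep_zero_extension {ν : Type*} [LinearOrder ν] (d : ℕ) (hd : 1 ≤ d)
    (G : SimpleGraph ν)
    (hG : ∀ p : ν → Fin d → ℝ, Generic d p → HIndep d G p)
    (v : ν) (hv : ∀ w, ¬ G.Adj v w)
    (D : Finset ν) (hD : D.card = d) (hvD : v ∉ D)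
    (G' : SimpleGraph ν)
    (hG' : G' = G ⊔ SimpleGraph.fromEdgeSet {e | ∃ u ∈ D, e = s(v, u)}) :
    ∀ p : ν → Fin d → ℝ, Generic d p → HIndep d G' p :=
  hIndep_zero_extension_general d G hG v hv D hD hvD G' hG'
end

section
/- Let k ≥ 2 and p ≥ 1 be integers. Construct G as follows: take disjoint sets A₁,B₁,…,A_p,B_p each of size k with chosen elements aᵢ ∈ Aᵢ, bᵢ ∈ Bᵢ; form the disjoint union of complete bipartite graphs on (Aᵢ,Bᵢ); then identify the sets B₁−b₁, …, B_p−b_p with each other, and identify the vertices a₁,…,a_p with each other. Then |V(G)| = k(p+1) and τ(G) ≤ k + p = |V(G)|/k + (k−1). -/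
/-- The vertex set of the example: the common vertex `a` (the identification of
`a₁,…,a_p`), the sets `Aᵢ − aᵢ` (of size `k−1`, for `i < p`), the vertices
`b₁,…,b_p`, and the common set `B − b` (of size `k−1`, the identification of the
sets `Bᵢ − bᵢ`). -/
abbrev LYvert (k p : ℕ) : Type := Unit ⊕ (Fin p × Fin (k - 1)) ⊕ Fin p ⊕ Fin (k - 1)

/-- The set `Aᵢ = {a} ∪ (Aᵢ − aᵢ)`. -/
def LYsideA (k p : ℕ) (i : Fin p) : Set (LYvert k p) :=
  {Sum.inl ()} ∪ {w | ∃ j, w = Sum.inr (Sum.inl (i, j))}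

/-- The set `Bᵢ = {bᵢ} ∪ (B − b)`. -/
def LYsideB (k p : ℕ) (i : Fin p) : Set (LYvert k p) :=
  {Sum.inr (Sum.inr (Sum.inl i))} ∪ {w | ∃ j, w = Sum.inr (Sum.inr (Sum.inr j))}

/-- The graph obtained from the disjoint union of the complete bipartite graphs on
`(Aᵢ, Bᵢ)` by identifying `B₁ − b₁, …, B_p − b_p` with each other and identifying
`a₁, …, a_p` with each other. -/
def LYgraph (k p : ℕ) : SimpleGraph (LYvert k p) :=
  SimpleGraph.fromRel (fun u w => ∃ i, u ∈ LYsideA k p i ∧ w ∈ LYsideB k p i)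

/-! Every edge joins some `Aᵢ` to `Bᵢ`, so the `B`-side vertices `{b₁, …, b_p} ∪ (B − b)`,
of which there are `p + (k − 1)`, already form a vertex cover. -/

def LYsideBAll (k p : ℕ) : Set (LYvert k p) :=
  Set.range (Sum.inr ∘ Sum.inr : Fin p ⊕ Fin (k - 1) → LYvert k p)

theorem SimpleGraph.mem_or_mem_of_fromRel_adj {V : Type*} {r : V → V → Prop} {S : Set V}
    (hS : ∀ u w, r u w → w ∈ S) {u w : V} (huw : (SimpleGraph.fromRel r).Adj u w) :
    u ∈ S ∨ w ∈ S := by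
  obtain ⟨-, h | h⟩ := (SimpleGraph.fromRel_adj r u w).1 huw
  · exact Or.inr (hS u w h)
  · exact Or.inl (hS w u h)

theorem nat_card_LYvert {k : ℕ} (p : ℕ) (hk : 1 ≤ k) : Nat.card (LYvert k p) = k * (p + 1) := by
  obtain ⟨m, rfl⟩ : ∃ m, k = m + 1 := ⟨k - 1, by omega⟩
  simp only [Nat.card_eq_fintype_card, Fintype.card_sum, Fintype.card_unit, Fintype.card_prod,
    Fintype.card_fin, Nat.add_sub_cancel]
  ring

theorem LYsideB_subset_LYsideBAll (k p : ℕ) (i : Fin p) : LYsideB k p i ⊆ LYsideBAll k p := by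
  rintro w (rfl | ⟨j, rfl⟩)
  · exact ⟨Sum.inl i, rfl⟩
  · exact ⟨Sum.inr j, rfl⟩

theorem LYgraph_adj_mem_or_mem_LYsideBAll (k p : ℕ) {u w : LYvert k p}
    (huw : (LYgraph k p).Adj u w) : u ∈ LYsideBAll k p ∨ w ∈ LYsideBAll k p :=
  SimpleGraph.mem_or_mem_of_fromRel_adj
    (fun _ _ ⟨i, _, hw⟩ => LYsideB_subset_LYsideBAll k p i hw) huw

theorem ncard_LYsideBAll (k p : ℕ) : (LYsideBAll k p).ncard = p + (k - 1) := by
  have hinj : Function.Injective (Sum.inr ∘ Sum.inr : Fin p ⊕ Fin (k - 1) → LYvert k p) :=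
    Sum.inr_injective.comp Sum.inr_injective
  rw [LYsideBAll, Set.ncard_range_of_injective hinj, Nat.card_sum, Nat.card_fin, Nat.card_fin]

theorem LY_example_card_and_cover_general (k p : ℕ) (hk : 2 ≤ k) :
    Nat.card (LYvert k p) = k * (p + 1) ∧
    (∃ C : Set (LYvert k p),
      (∀ u w, (LYgraph k p).Adj u w → u ∈ C ∨ w ∈ C) ∧ C.ncard ≤ k + p) ∧
    k + p = k * (p + 1) / k + (k - 1) := by
  refine ⟨nat_card_LYvert p (by omega),
    ⟨LYsideBAll k p, fun _ _ => LYgraph_adj_mem_or_mem_LYsideBAll k p, ?_⟩, ?_⟩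
  · rw [ncard_LYsideBAll]
    omega
  · rw [Nat.mul_div_cancel_left _ (by omega : 0 < k)]
    omega

/-- the graph above has `k(p+1)` vertices and vertex cover number at
most `k + p = |V(G)|/k + (k−1)`. -/
theorem LY_example_card_and_cover (k p : ℕ) (hk : 2 ≤ k) (hp : 1 ≤ p) :
    Nat.card (LYvert k p) = k * (p + 1) ∧
    (∃ C : Set (LYvert k p),
      (∀ u w, (LYgraph k p).Adj u w → u ∈ C ∨ w ∈ C) ∧ C.ncard ≤ k + p) ∧
    k + p = k * (p + 1) / k + (k - 1) :=
  LY_example_card_and_cover_general k p hk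
end

section
/- Let a, b, k be positive integers with k = 2ab − 1 and (a,b) ≠ (1,1). Let G₀ be a k-connected, k-regular bipartite graph on parts X₀, Y₀ of equal size s > k. Let G be obtained from G₀ by splitting each vertex v of G₀ into a set A_v of k degree-one vertices (each inheriting one edge of v) and a set B_v of k new vertices, and adding all edges between A_v and B_v. If r is a submodular function on subsets of E(G) with r(E(G_v)) = (a+b)k − ab for each copy G_v of K_{k,k} induced by A_v ∪ B_v, and r(F) ≤ |F| for every edge set F, then r(E(G)) ≤ a|X| + b|Y| − s < a|X| + b|Y| − ab, where (X,Y) is the bipartition of G with |X| = |Y| = 2sk. -/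
open Set

namespace SimpleGraph.IsBipartitionOf

variable {V : Type*} {G : SimpleGraph V} {A B : Set V}

lemma mem_or_mem_of_adj (h : G.IsBipartitionOf A B) {u v : V} (huv : G.Adj u v) :
    u ∈ A ∨ v ∈ A := by
  have hu : u ∈ A ∪ B := h.1 ▸ mem_univ u
  exact hu.imp_right fun huB => (h.2.2 v u huv.symm).2 huB

lemma card_eq_add [Finite V] (h : G.IsBipartitionOf A B) :
    Nat.card V = Nat.card A + Nat.card B := by
  rw [← ncard_univ, ← h.1, ncard_union_eq h.2.1, Nat.card_coe_set_eq, Nat.card_coe_set_eq]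

end SimpleGraph.IsBipartitionOf

section Submodular

variable {α : Type*} {r : Set α → ℕ}

lemma union_le_add_of_submodular
    (hsub : ∀ F₁ F₂, r (F₁ ∪ F₂) + r (F₁ ∩ F₂) ≤ r F₁ + r F₂) (F₁ F₂ : Set α) :
    r (F₁ ∪ F₂) ≤ r F₁ + r F₂ :=
  (Nat.le_add_right _ _).trans (hsub F₁ F₂)

lemma iUnion_le_sum_of_submodular {ι : Type*} [Fintype ι]
    (hsub : ∀ F₁ F₂, r (F₁ ∪ F₂) + r (F₁ ∩ F₂) ≤ r F₁ + r F₂) (h0 : r ∅ = 0) (f : ι → Set α) :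
    r (⋃ i, f i) ≤ ∑ i, r (f i) := by
  classical
  suffices ∀ t : Finset ι, r (⋃ i ∈ t, f i) ≤ ∑ i ∈ t, r (f i) by simpa using this Finset.univ
  intro t
  induction t using Finset.induction_on with
  | empty => simp [h0]
  | insert i t hi ih =>
    rw [Finset.set_biUnion_insert, Finset.sum_insert hi]
    exact (union_le_add_of_submodular hsub _ _).trans (Nat.add_le_add_left ih _)

end Submodular

section SplitGraph

variable {ν : Type*} {k : ℕ} {H : SimpleGraph ν} (φ : ∀ v, Fin k ≃ {w // H.Adj v w})

lemma ncard_inl_union_inr [Finite ν] (A B : Set ν) :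
    ({u | ∃ v ∈ A, ∃ i, u = Sum.inl (v, i)} ∪ {u | ∃ v ∈ B, ∃ i, u = Sum.inr (v, i)} :
      Set (ν × Fin k ⊕ ν × Fin k)).ncard = (A.ncard + B.ncard) * k := by
  have hset : ({u | ∃ v ∈ A, ∃ i, u = Sum.inl (v, i)} ∪ {u | ∃ v ∈ B, ∃ i, u = Sum.inr (v, i)} :
      Set (ν × Fin k ⊕ ν × Fin k)) = Sum.inl '' (A ×ˢ univ) ∪ Sum.inr '' (B ×ˢ univ) := by
    ext (⟨v, i⟩ | ⟨v, i⟩) <;> simp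
  rw [hset, ncard_union_eq (by simp [disjoint_left]),
    ncard_image_of_injective _ Sum.inl_injective, ncard_image_of_injective _ Sum.inr_injective,
    ncard_prod, ncard_prod, ncard_univ, Nat.card_fin, add_mul]

def splitGraph : SimpleGraph (ν × Fin k ⊕ ν × Fin k) :=
  SimpleGraph.fromRel fun uu ww =>
    (∃ v i j, uu = Sum.inl (v, i) ∧ ww = Sum.inr (v, j)) ∨
    (∃ v v' i j, uu = Sum.inl (v, i) ∧ ww = Sum.inl (v', j) ∧
      (φ v i : ν) = v' ∧ (φ v' j : ν) = v)

def gadgetEdges (v : ν) : Set (Sym2 (ν × Fin k ⊕ ν × Fin k)) :=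
  {e | ∃ i j, e = s(Sum.inl (v, i), Sum.inr (v, j))}

def linkEdges : Set (Sym2 (ν × Fin k ⊕ ν × Fin k)) :=
  {e | ∃ v v' i j, e = s(Sum.inl (v, i), Sum.inl (v', j)) ∧
    (φ v i : ν) = v' ∧ (φ v' j : ν) = v}

lemma edgeSet_splitGraph : (splitGraph φ).edgeSet = linkEdges φ ∪ ⋃ v, gadgetEdges v := by
  have hne (v : ν) (i : Fin k) : (φ v i : ν) ≠ v := (φ v i).2.ne'
  ext e
  induction e using Sym2.ind with
  | _ u w =>
    simp only [splitGraph, linkEdges, gadgetEdges, SimpleGraph.mem_edgeSet,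
      SimpleGraph.fromRel_adj, mem_union, mem_iUnion]
    aesop

/-- The vertex of `A_{φ v i}` that inherited the other end of the edge inherited by `(v, i)`. -/
def partner (p : ν × Fin k) : ν × Fin k :=
  (φ p.1 p.2, (φ (φ p.1 p.2)).symm ⟨p.1, (φ p.1 p.2).2.symm⟩)

lemma eq_partner_iff {p q : ν × Fin k} :
    q = partner φ p ↔ (φ p.1 p.2 : ν) = q.1 ∧ (φ q.1 q.2 : ν) = p.1 := by
  obtain ⟨v, i⟩ := p
  obtain ⟨w, j⟩ := q
  constructor
  · rintro ⟨⟩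
    simp
  · rintro ⟨rfl, h⟩
    exact Prod.ext rfl ((Equiv.eq_symm_apply _).2 (Subtype.ext h))

lemma ncard_linkEdges_le [Finite ν] {A : Set ν} (hA : ∀ u v, H.Adj u v → u ∈ A ∨ v ∈ A) :
    (linkEdges φ).ncard ≤ A.ncard * k := by
  have hsub : linkEdges φ ⊆ (fun p => s(Sum.inl p, Sum.inl (partner φ p))) '' (A ×ˢ univ) := by
    rintro e ⟨v, v', i, j, rfl, h, h'⟩
    have hadj : H.Adj v v' := h ▸ (φ v i).2
    rcases hA v v' hadj with hv | hv'
    · refine ⟨(v, i), ⟨hv, trivial⟩, ?_⟩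
      dsimp only
      rw [← (eq_partner_iff φ (q := (v', j))).2 ⟨h, h'⟩]
    · refine ⟨(v', j), ⟨hv', trivial⟩, ?_⟩
      dsimp only
      rw [← (eq_partner_iff φ (q := (v, i))).2 ⟨h', h⟩, Sym2.eq_swap]
  calc (linkEdges φ).ncard ≤ (A ×ˢ (univ : Set (Fin k))).ncard :=
        (ncard_le_ncard hsub).trans (ncard_image_le (toFinite _))
    _ = A.ncard * k := by rw [ncard_prod, ncard_univ, Nat.card_fin]

lemma rank_edgeSet_splitGraph_le [Fintype ν] {r : Set (Sym2 (ν × Fin k ⊕ ν × Fin k)) → ℕ}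
    (hsub : ∀ F₁ F₂, r (F₁ ∪ F₂) + r (F₁ ∩ F₂) ≤ r F₁ + r F₂) (hcard : ∀ F, r F ≤ F.ncard)
    {A : Set ν} (hA : ∀ u v, H.Adj u v → u ∈ A ∨ v ∈ A) :
    r (splitGraph φ).edgeSet ≤ A.ncard * k + ∑ v, r (gadgetEdges v) := by
  have hr0 : r ∅ = 0 := Nat.le_zero.1 ((hcard ∅).trans_eq (ncard_empty _))
  rw [edgeSet_splitGraph]
  calc r (linkEdges φ ∪ ⋃ v, gadgetEdges v) ≤ r (linkEdges φ) + ∑ v, r (gadgetEdges v) :=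
        (union_le_add_of_submodular hsub _ _).trans
          (Nat.add_le_add_left (iUnion_le_sum_of_submodular hsub hr0 _) _)
    _ ≤ A.ncard * k + ∑ v, r (gadgetEdges v) :=
        Nat.add_le_add_right ((hcard _).trans (ncard_linkEdges_le φ hA)) _

end SplitGraph

theorem LY_birigidity_example_general {ν₀ : Type*} [Fintype ν₀] (a b k s : ℕ)
    (ha : 0 < a) (hb : 0 < b) (hk : k = 2 * a * b - 1)
    (G₀ : SimpleGraph ν₀) (X₀ Y₀ : Set ν₀) (hbip : G₀.IsBipartitionOf X₀ Y₀)
    (hX₀ : Nat.card X₀ = s) (hY₀ : Nat.card Y₀ = s) (hs : k < s)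
    (φ : ∀ v : ν₀, Fin k ≃ {w : ν₀ // G₀.Adj v w})
    (G : SimpleGraph (ν₀ × Fin k ⊕ ν₀ × Fin k))
    (hG : G = SimpleGraph.fromRel (fun uu ww =>
      (∃ v i j, uu = Sum.inl (v, i) ∧ ww = Sum.inr (v, j)) ∨
      (∃ v v' i j, uu = Sum.inl (v, i) ∧ ww = Sum.inl (v', j) ∧
        (φ v i : ν₀) = v' ∧ (φ v' j : ν₀) = v)))
    (X Y : Set (ν₀ × Fin k ⊕ ν₀ × Fin k))
    (hX : X = {u | ∃ v ∈ X₀, ∃ i, u = Sum.inl (v, i)} ∪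
              {u | ∃ v ∈ Y₀, ∃ i, u = Sum.inr (v, i)})
    (hY : Y = {u | ∃ v ∈ Y₀, ∃ i, u = Sum.inl (v, i)} ∪
              {u | ∃ v ∈ X₀, ∃ i, u = Sum.inr (v, i)})
    (r : Set (Sym2 (ν₀ × Fin k ⊕ ν₀ × Fin k)) → ℕ)
    (hsub : ∀ F₁ F₂, r (F₁ ∪ F₂) + r (F₁ ∩ F₂) ≤ r F₁ + r F₂)
    (hcard : ∀ F, r F ≤ F.ncard)
    (hGv : ∀ v : ν₀,
      r {e | ∃ i j, e = s(Sum.inl (v, i), Sum.inr (v, j))} = (a + b) * k - a * b) :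
    Nat.card X = 2 * s * k ∧ Nat.card Y = 2 * s * k ∧
    (r G.edgeSet : ℤ) ≤ a * Nat.card X + b * Nat.card Y - s ∧
    (a * Nat.card X + b * Nat.card Y - s : ℤ) <
      a * Nat.card X + b * Nat.card Y - a * b := by
  have hcardX : Nat.card X = 2 * s * k := by
    rw [hX, Nat.card_coe_set_eq, ncard_inl_union_inr, ← Nat.card_coe_set_eq,
      ← Nat.card_coe_set_eq, hX₀, hY₀, two_mul]
  have hcardY : Nat.card Y = 2 * s * k := by
    rw [hY, Nat.card_coe_set_eq, ncard_inl_union_inr, ← Nat.card_coe_set_eq,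
      ← Nat.card_coe_set_eq, hX₀, hY₀, two_mul]
  have hV : Fintype.card ν₀ = 2 * s := by
    rw [← Nat.card_eq_fintype_card, hbip.card_eq_add, hX₀, hY₀, two_mul]
  have hr : r G.edgeSet ≤ s * k + 2 * s * ((a + b) * k - a * b) := by
    have h := rank_edgeSet_splitGraph_le φ hsub hcard fun _ _ huv => hbip.mem_or_mem_of_adj huv
    rw [← Nat.card_coe_set_eq, hX₀] at h
    simpa only [← show G = splitGraph φ from hG, gadgetEdges, hGv, Finset.sum_const,
      Finset.card_univ, hV, smul_eq_mul] using h
  have hk' : (k : ℤ) + 1 = 2 * a * b := by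
    have : 1 ≤ 2 * a * b := Nat.mul_pos (Nat.mul_pos two_pos ha) hb
    rw [hk]; push_cast [Nat.cast_sub this]; ring
  -- so the subtraction in `hGv` does not truncate
  have hab_le : a * b ≤ (a + b) * k := by nlinarith
  refine ⟨hcardX, hcardY, ?_, ?_⟩
  · rw [hcardX, hcardY]
    calc (r G.edgeSet : ℤ) ≤ ((s * k + 2 * s * ((a + b) * k - a * b) : ℕ) : ℤ) := by
          exact_mod_cast hr
      _ = a * (2 * s * k : ℕ) + b * (2 * s * k : ℕ) - s := by
          push_cast [Nat.cast_sub hab_le]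
          linear_combination (s : ℤ) * hk'
  · have hab_le_k : (a * b : ℤ) ≤ k := by
      linarith [mul_pos (Int.natCast_pos.2 ha) (Int.natCast_pos.2 hb)]
    have hks : (k : ℤ) < s := by exact_mod_cast hs
    linarith

/-- the Lovász–Yemini-type example. `G₀` is a `k`-connected,
`k`-regular bipartite graph (the `k`-regularity being witnessed by the
equivalences `φ v : Fin k ≃ N(v)`) on parts `X₀, Y₀` of size `s > k`, where
`k = 2ab − 1` and `(a,b) ≠ (1,1)`. The graph `G` is obtained by splitting each
vertex `v` into a set `A_v` of `k` degree-one vertices (the vertex `inl (v,i)`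
inheriting the edge of `v` towards `φ v i`) and a set `B_v` of `k` new vertices,
with all edges between `A_v` and `B_v`. If `r` is submodular, `r(F) ≤ |F|` for
every edge set `F`, and `r(E(G_v)) = (a+b)k − ab` for each gadget `G_v ≅ K_{k,k}`,
then `r(E(G)) ≤ a|X| + b|Y| − s < a|X| + b|Y| − ab`, where `(X,Y)` is the
bipartition of `G`, with `|X| = |Y| = 2sk`. -/
theorem LY_birigidity_example {ν₀ : Type*} [Fintype ν₀] (a b k s : ℕ)
    (ha : 0 < a) (hb : 0 < b) (hk : k = 2 * a * b - 1) (hab : ¬(a = 1 ∧ b = 1))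
    (G₀ : SimpleGraph ν₀) (X₀ Y₀ : Set ν₀) (hbip : G₀.IsBipartitionOf X₀ Y₀)
    (hX₀ : Nat.card X₀ = s) (hY₀ : Nat.card Y₀ = s) (hs : k < s)
    (hconn : KConn k G₀)
    (φ : ∀ v : ν₀, Fin k ≃ {w : ν₀ // G₀.Adj v w})
    (G : SimpleGraph (ν₀ × Fin k ⊕ ν₀ × Fin k))
    (hG : G = SimpleGraph.fromRel (fun uu ww =>
      (∃ v i j, uu = Sum.inl (v, i) ∧ ww = Sum.inr (v, j)) ∨
      (∃ v v' i j, uu = Sum.inl (v, i) ∧ ww = Sum.inl (v', j) ∧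
        (φ v i : ν₀) = v' ∧ (φ v' j : ν₀) = v)))
    (X Y : Set (ν₀ × Fin k ⊕ ν₀ × Fin k))
    (hX : X = {u | ∃ v ∈ X₀, ∃ i, u = Sum.inl (v, i)} ∪
              {u | ∃ v ∈ Y₀, ∃ i, u = Sum.inr (v, i)})
    (hY : Y = {u | ∃ v ∈ Y₀, ∃ i, u = Sum.inl (v, i)} ∪
              {u | ∃ v ∈ X₀, ∃ i, u = Sum.inr (v, i)})
    (r : Set (Sym2 (ν₀ × Fin k ⊕ ν₀ × Fin k)) → ℕ)
    (hsub : ∀ F₁ F₂, r (F₁ ∪ F₂) + r (F₁ ∩ F₂) ≤ r F₁ + r F₂)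
    (hcard : ∀ F, r F ≤ F.ncard)
    (hGv : ∀ v : ν₀,
      r {e | ∃ i j, e = s(Sum.inl (v, i), Sum.inr (v, j))} = (a + b) * k - a * b) :
    Nat.card X = 2 * s * k ∧ Nat.card Y = 2 * s * k ∧
    (r G.edgeSet : ℤ) ≤ a * Nat.card X + b * Nat.card Y - s ∧
    (a * Nat.card X + b * Nat.card Y - s : ℤ) <
      a * Nat.card X + b * Nat.card Y - a * b :=
  LY_birigidity_example_general a b k s ha hb hk G₀ X₀ Y₀ hbip hX₀ hY₀ hs φ G hG X Y hX hY r hsub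
    hcard hGv
end
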